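/- arXiv:1206.4882 — 10 statements merged into one kernel-verified Lean document; each statement's English description precedes it below -/
import Mathlib

section
/- Let D be a triangulated category with a recollement by triangulated categories Y and X (with functors i^*, i_*, i^!, j_!, j^*, j_* satisfying the usual recollement axioms). Given torsion pairs (X', X'') in X and (Y', Y'') in Y, the pair (D', D'') defined by D' = {Z ∈ D : j^*Z ∈ X', i^*Z ∈ Y'} and D'' = {Z ∈ D : j^*Z ∈ X'', i^!Z ∈ Y''} is a torsion pair in D. -/
open CategoryTheory Limits Pretriangulated

namespace Glueing

variable (D : Type*) [Category D] [HasZeroObject D] [Preadditive D] [HasShift D ℤ]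
  [∀ n : ℤ, (shiftFunctor D n).Additive] [Pretriangulated D]

/-- A torsion pair in a triangulated category: a pair of strict (iso-closed) full
subcategories, closed under direct summands, with no morphisms from the first to the
second, such that every object is an extension of an object of the second class by an
object of the first class. -/
structure IsTorsionPair (P Q : D → Prop) : Prop where
  isoClosed_left : ∀ {A B : D}, (A ≅ B) → P A → P B
  isoClosed_right : ∀ {A B : D}, (A ≅ B) → Q A → Q B
  summands_left : ∀ {A B : D} (i : A ⟶ B) (r : B ⟶ A), i ≫ r = 𝟙 A → P B → P A
  summands_right : ∀ {A B : D} (i : A ⟶ B) (r : B ⟶ A), i ≫ r = 𝟙 A → Q B → Q A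
  orthogonal : ∀ {A B : D}, P A → Q B → ∀ f : A ⟶ B, f = 0
  exists_triangle : ∀ Z : D, ∃ (A B : D) (f : A ⟶ Z) (g : Z ⟶ B) (h : B ⟶ A⟦(1 : ℤ)⟧),
    P A ∧ Q B ∧ Triangle.mk f g h ∈ distinguishedTriangles

/-- A t-structure `(D^{≤0}, D^{≥0})` on a triangulated category, encoded as the
requirement that `(D^{≤0}, D^{≥1})` is a torsion pair with `D^{≤0}[1] ⊆ D^{≤0}`.
Here `Le` is `D^{≤0}` and `Ge` is `D^{≥0}`; the class `D^{≥1} = D^{≥0}[-1]` consists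
of objects `B` with `Ge (B⟦1⟧)`. -/
structure IsTStructure (Le Ge : D → Prop) : Prop where
  isoClosed_le : ∀ {A B : D}, (A ≅ B) → Le A → Le B
  isoClosed_ge : ∀ {A B : D}, (A ≅ B) → Ge A → Ge B
  summands_le : ∀ {A B : D} (i : A ⟶ B) (r : B ⟶ A), i ≫ r = 𝟙 A → Le B → Le A
  summands_ge : ∀ {A B : D} (i : A ⟶ B) (r : B ⟶ A), i ≫ r = 𝟙 A → Ge B → Ge A
  shift_le : ∀ A : D, Le A → Le (A⟦(1 : ℤ)⟧)
  shift_ge : ∀ A : D, Ge A → Ge (A⟦(-1 : ℤ)⟧)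
  orthogonal : ∀ {A B : D}, Le A → Ge (B⟦(1 : ℤ)⟧) → ∀ f : A ⟶ B, f = 0
  exists_triangle : ∀ Z : D, ∃ (A B : D) (f : A ⟶ Z) (g : Z ⟶ B) (h : B ⟶ A⟦(1 : ℤ)⟧),
    Le A ∧ Ge (B⟦(1 : ℤ)⟧) ∧ Triangle.mk f g h ∈ distinguishedTriangles

/-- A co-t-structure `(D_{≥0}, D_{≤0})` on a triangulated category; `Ge` is `D_{≥0}`
and `Le` is `D_{≤0}`. The class `D_{≤-1} = D_{≤0}[1]` consists of objects `B` with
`Le (B⟦-1⟧)`. -/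
structure IsCoTStructure (Ge Le : D → Prop) : Prop where
  isoClosed_ge : ∀ {A B : D}, (A ≅ B) → Ge A → Ge B
  isoClosed_le : ∀ {A B : D}, (A ≅ B) → Le A → Le B
  summands_ge : ∀ {A B : D} (i : A ⟶ B) (r : B ⟶ A), i ≫ r = 𝟙 A → Ge B → Ge A
  summands_le : ∀ {A B : D} (i : A ⟶ B) (r : B ⟶ A), i ≫ r = 𝟙 A → Le B → Le A
  shift_ge : ∀ A : D, Ge A → Ge (A⟦(-1 : ℤ)⟧)
  shift_le : ∀ A : D, Le A → Le (A⟦(1 : ℤ)⟧)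
  orthogonal : ∀ {A B : D}, Ge A → Le (B⟦(-1 : ℤ)⟧) → ∀ f : A ⟶ B, f = 0
  exists_triangle : ∀ Z : D, ∃ (A B : D) (f : A ⟶ Z) (g : Z ⟶ B) (h : B ⟶ A⟦(1 : ℤ)⟧),
    Ge A ∧ Le (B⟦(-1 : ℤ)⟧) ∧ Triangle.mk f g h ∈ distinguishedTriangles

variable (Y X : Type*) [Category Y] [HasZeroObject Y] [Preadditive Y] [HasShift Y ℤ]
  [∀ n : ℤ, (shiftFunctor Y n).Additive] [Pretriangulated Y]
  [Category X] [HasZeroObject X] [Preadditive X] [HasShift X ℤ]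
  [∀ n : ℤ, (shiftFunctor X n).Additive] [Pretriangulated X]

/-- A recollement of a triangulated category `D` by triangulated categories `Y` and `X`:
six triangle functors `i^* ⊣ i_* ⊣ i^!` and `j_! ⊣ j^* ⊣ j_*` with `i_*, j_!, j_*`
fully faithful, `j^* ∘ i_* = 0`, and the two canonical glueing triangles. -/
structure Recollement where
  iStar : D ⥤ Y
  iLower : Y ⥤ D
  iShriek : D ⥤ Y
  jLower : X ⥤ D
  jStar : D ⥤ X
  jUpper : X ⥤ D
  commShift_iStar : iStar.CommShift ℤ
  commShift_iLower : iLower.CommShift ℤ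
  commShift_iShriek : iShriek.CommShift ℤ
  commShift_jLower : jLower.CommShift ℤ
  commShift_jStar : jStar.CommShift ℤ
  commShift_jUpper : jUpper.CommShift ℤ
  isTriangulated_iStar : letI := commShift_iStar; iStar.IsTriangulated
  isTriangulated_iLower : letI := commShift_iLower; iLower.IsTriangulated
  isTriangulated_iShriek : letI := commShift_iShriek; iShriek.IsTriangulated
  isTriangulated_jLower : letI := commShift_jLower; jLower.IsTriangulated
  isTriangulated_jStar : letI := commShift_jStar; jStar.IsTriangulated
  isTriangulated_jUpper : letI := commShift_jUpper; jUpper.IsTriangulated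
  adj_i₁ : iStar ⊣ iLower
  adj_i₂ : iLower ⊣ iShriek
  adj_j₁ : jLower ⊣ jStar
  adj_j₂ : jStar ⊣ jUpper
  iLower_full : iLower.Full
  iLower_faithful : iLower.Faithful
  jLower_full : jLower.Full
  jLower_faithful : jLower.Faithful
  jUpper_full : jUpper.Full
  jUpper_faithful : jUpper.Faithful
  jStar_iLower_zero : ∀ A : Y, IsZero (jStar.obj (iLower.obj A))
  triangle₁ : ∀ Z : D, ∃ δ : jUpper.obj (jStar.obj Z) ⟶ (iLower.obj (iShriek.obj Z))⟦(1 : ℤ)⟧,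
    Triangle.mk (adj_i₂.counit.app Z) (adj_j₂.unit.app Z) δ ∈ distinguishedTriangles
  triangle₂ : ∀ Z : D, ∃ δ : iLower.obj (iStar.obj Z) ⟶ (jLower.obj (jStar.obj Z))⟦(1 : ℤ)⟧,
    Triangle.mk (adj_j₁.counit.app Z) (adj_i₁.unit.app Z) δ ∈ distinguishedTriangles

/-- An object `M` generates a triangulated category if the only class of objects which
is closed under isomorphisms, shifts, extensions and direct summands and contains `M`
is the class of all objects. -/
def Generates (C : Type*) [Category C] [HasZeroObject C] [Preadditive C] [HasShift C ℤ]
    [∀ n : ℤ, (shiftFunctor C n).Additive] [Pretriangulated C] (M : C) : Prop :=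
  ∀ P : C → Prop,
    (∀ {A B : C}, (A ≅ B) → P A → P B) →
    (∀ (n : ℤ) (A : C), P A → P (A⟦n⟧)) →
    (∀ T : Triangle C, T ∈ distinguishedTriangles → P T.obj₁ → P T.obj₃ → P T.obj₂) →
    (∀ {A B : C} (i : A ⟶ B) (r : B ⟶ A), i ≫ r = 𝟙 A → P B → P A) →
    P M → ∀ Z : C, P Z

/-- A silting object: no positive self-extensions, and it generates the category. -/
def IsSilting (C : Type*) [Category C] [HasZeroObject C] [Preadditive C] [HasShift C ℤ]
    [∀ n : ℤ, (shiftFunctor C n).Additive] [Pretriangulated C] (M : C) : Prop :=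
  (∀ i : ℤ, 0 < i → ∀ f : M ⟶ M⟦i⟧, f = 0) ∧ Generates C M

end Glueing

/-!
For `f : A ⟶ B` with `A ∈ D'` and `B ∈ D''`, the triangle `i_*i^!B → B → j_*j^*B` shows that `f`
vanishes: its component into `j_*j^*B` is adjoint to a map `j^*A ⟶ j^*B`, and the remaining
factorisation through `i_*i^!B` is adjoint to a map `i^*A ⟶ i^!B`.

For an object `Z`, take the torsion triangle `x₁ → j^*Z → x₂` in `X`, let `W → Z → j_*x₂` be a
fibre of the adjoint map, so that `j^*W ≅ x₁`; then take the torsion triangle `y₁ → i^*W → y₂`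
in `Y` and a fibre `A → W → i_*y₂`, so that `i^*A ≅ y₁`. Completing `A → Z` to a triangle
`A → Z → B`, the vanishing of `j^*i_*` and of `i^!j_*` identifies `j^*A ≅ x₁`, `j^*B ≅ x₂` and
`i^!B ≅ y₂`.
-/

lemma CategoryTheory.Functor.map_comp_map_eq_id {C E : Type*} [Category C] [Category E]
    (F : C ⥤ E) {A B : C} {i : A ⟶ B} {r : B ⟶ A} (h : i ≫ r = 𝟙 A) :
    F.map i ≫ F.map r = 𝟙 (F.obj A) := by
  rw [← F.map_comp, h, F.map_id]

section

variable {C E : Type*} [Category C] [HasZeroObject C] [Preadditive C] [HasShift C ℤ]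
  [∀ n : ℤ, (shiftFunctor C n).Additive] [Pretriangulated C]
  [Category E] [HasZeroObject E] [Preadditive E] [HasShift E ℤ]
  [∀ n : ℤ, (shiftFunctor E n).Additive] [Pretriangulated E]

lemma CategoryTheory.Functor.isIso_map_of_isZero_map_cone (F : C ⥤ E) [F.CommShift ℤ]
    [F.IsTriangulated] {A W V : C} {u : A ⟶ W} {v : W ⟶ V} {δ : V ⟶ A⟦(1 : ℤ)⟧}
    (hT : Triangle.mk u v δ ∈ distTriang C) (hV : IsZero (F.obj V)) : IsIso (F.map u) :=
  (Triangle.isZero₃_iff_isIso₁ _ (F.map_distinguished _ hT)).mp hV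

lemma CategoryTheory.Functor.nonempty_iso_map_cone_of_isIso_map_left (F : C ⥤ E)
    [F.CommShift ℤ] [F.IsTriangulated] {A W Z B V : C} {u : A ⟶ W} {w : W ⟶ Z} {g : Z ⟶ B}
    {h : B ⟶ A⟦(1 : ℤ)⟧} {v : Z ⟶ V} {δ : V ⟶ W⟦(1 : ℤ)⟧}
    (hB : Triangle.mk (u ≫ w) g h ∈ distTriang C) (hV : Triangle.mk w v δ ∈ distTriang C)
    [IsIso (F.map u)] : Nonempty (F.obj B ≅ F.obj V) :=
  ⟨Triangle.π₃.mapIso (isoTriangleOfIso₁₂ _ _ (F.map_distinguished _ hB)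
    (F.map_distinguished _ hV) (asIso (F.map u) : F.obj A ≅ F.obj W) (Iso.refl _)
    ((Category.comp_id _).trans (F.map_comp u w)))⟩

lemma CategoryTheory.Functor.nonempty_iso_map_cone_of_isIso_map_right (F : C ⥤ E)
    [F.CommShift ℤ] [F.IsTriangulated] {A W Z B V : C} {u : A ⟶ W} {w : W ⟶ Z} {g : Z ⟶ B}
    {h : B ⟶ A⟦(1 : ℤ)⟧} {v : W ⟶ V} {δ : V ⟶ A⟦(1 : ℤ)⟧}
    (hB : Triangle.mk (u ≫ w) g h ∈ distTriang C) (hV : Triangle.mk u v δ ∈ distTriang C)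
    [IsIso (F.map w)] : Nonempty (F.obj B ≅ F.obj V) :=
  ⟨Triangle.π₃.mapIso (isoTriangleOfIso₁₂ _ _ (F.map_distinguished _ hB)
    (F.map_distinguished _ hV) (Iso.refl _) (asIso (F.map w) : F.obj W ≅ F.obj Z).symm
    (show F.map (u ≫ w) ≫ (asIso (F.map w)).inv = 𝟙 _ ≫ F.map u by simp))⟩

lemma CategoryTheory.Adjunction.nonempty_iso_map_fiber_homEquiv {F : C ⥤ E} {G : E ⥤ C}
    [F.CommShift ℤ] [F.IsTriangulated] (adj : F ⊣ G) {Z : C} {x₁ x₂ : E}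
    {a : x₁ ⟶ F.obj Z} {b : F.obj Z ⟶ x₂} {d : x₂ ⟶ x₁⟦(1 : ℤ)⟧}
    (hx : Triangle.mk a b d ∈ distTriang E) [IsIso (adj.counit.app x₂)] {W : C} {w : W ⟶ Z}
    {δ : G.obj x₂ ⟶ W⟦(1 : ℤ)⟧} (hW : Triangle.mk w (adj.homEquiv _ _ b) δ ∈ distTriang C) :
    Nonempty (F.obj W ≅ x₁) := by
  have e := isoTriangleOfIso₁₂ _ _ (rot_of_distTriang _ (F.map_distinguished _ hW))
    (rot_of_distTriang _ hx) (Iso.refl _) (asIso (adj.counit.app x₂) : F.obj (G.obj x₂) ≅ x₂)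
    (show F.map (adj.homEquiv _ _ b) ≫ adj.counit.app x₂ = 𝟙 _ ≫ b by
      simp [← Adjunction.homEquiv_counit])
  exact ⟨(shiftFunctor E (1 : ℤ)).preimageIso (Triangle.π₃.mapIso e)⟩

end

namespace Glueing.Recollement

variable {D Y X : Type*} [Category D] [HasZeroObject D] [Preadditive D] [HasShift D ℤ]
  [∀ n : ℤ, (shiftFunctor D n).Additive] [Pretriangulated D]
  [Category Y] [HasZeroObject Y] [Preadditive Y] [HasShift Y ℤ]
  [∀ n : ℤ, (shiftFunctor Y n).Additive] [Pretriangulated Y]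
  [Category X] [HasZeroObject X] [Preadditive X] [HasShift X ℤ]
  [∀ n : ℤ, (shiftFunctor X n).Additive] [Pretriangulated X]
  (R : Recollement D Y X)

instance : R.iStar.CommShift ℤ := R.commShift_iStar
instance : R.iShriek.CommShift ℤ := R.commShift_iShriek
instance : R.jStar.CommShift ℤ := R.commShift_jStar
instance : R.iStar.IsTriangulated := R.isTriangulated_iStar
instance : R.iShriek.IsTriangulated := R.isTriangulated_iShriek
instance : R.jStar.IsTriangulated := R.isTriangulated_jStar
instance : R.iLower.Full := R.iLower_full
instance : R.iLower.Faithful := R.iLower_faithful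
instance : R.jUpper.Full := R.jUpper_full
instance : R.jUpper.Faithful := R.jUpper_faithful

lemma iShriek_jUpper_zero (x : X) : IsZero (R.iShriek.obj (R.jUpper.obj x)) := by
  rw [IsZero.iff_id_eq_zero]
  apply (R.adj_i₂.homEquiv _ _).symm.injective
  apply (R.adj_j₂.homEquiv _ _).symm.injective
  exact (R.jStar_iLower_zero _).eq_of_src _ _

lemma eq_zero_of_forall_jStar_of_forall_iStar_iShriek {A B : D}
    (hj : ∀ f : R.jStar.obj A ⟶ R.jStar.obj B, f = 0)
    (hi : ∀ f : R.iStar.obj A ⟶ R.iShriek.obj B, f = 0) (f : A ⟶ B) : f = 0 := by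
  obtain ⟨δ, hB⟩ := R.triangle₁ B
  have hf : f ≫ R.adj_j₂.unit.app B = 0 :=
    (R.adj_j₂.homEquiv _ _).symm.injective ((hj _).trans (hj _).symm)
  obtain ⟨g, rfl⟩ := Triangle.coyoneda_exact₂ _ hB f hf
  have hg : g = 0 := (R.adj_i₁.homEquiv _ _).symm.injective ((hi _).trans (hi _).symm)
  rw [hg]
  exact zero_comp

lemma exists_distTriang_glued {PX QX : X → Prop} {PY QY : Y → Prop}
    (hX : IsTorsionPair X PX QX) (hY : IsTorsionPair Y PY QY) (Z : D) :
    ∃ (A B : D) (f : A ⟶ Z) (g : Z ⟶ B) (h : B ⟶ A⟦(1 : ℤ)⟧),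
      (PX (R.jStar.obj A) ∧ PY (R.iStar.obj A)) ∧ (QX (R.jStar.obj B) ∧ QY (R.iShriek.obj B)) ∧
      Triangle.mk f g h ∈ distTriang D := by
  obtain ⟨x₁, x₂, a, b, d, hx₁, hx₂, hx⟩ := hX.exists_triangle (R.jStar.obj Z)
  obtain ⟨W, w, δ₁, hW⟩ := distinguished_cocone_triangle₁ (R.adj_j₂.homEquiv _ _ b)
  obtain ⟨y₁, y₂, a', b', d', hy₁, hy₂, hy⟩ := hY.exists_triangle (R.iStar.obj W)
  obtain ⟨A, u, δ₂, hA⟩ := distinguished_cocone_triangle₁ (R.adj_i₁.homEquiv _ _ b')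
  obtain ⟨B, g, h, hB⟩ := distinguished_cocone_triangle (u ≫ w)
  have : IsIso (R.jStar.map u) :=
    R.jStar.isIso_map_of_isZero_map_cone hA (R.jStar_iLower_zero y₂)
  have : IsIso (R.iShriek.map w) :=
    R.iShriek.isIso_map_of_isZero_map_cone hW (R.iShriek_jUpper_zero x₂)
  obtain ⟨eW⟩ := R.adj_j₂.nonempty_iso_map_fiber_homEquiv hx hW
  obtain ⟨eA⟩ := R.adj_i₁.nonempty_iso_map_fiber_homEquiv hy hA
  obtain ⟨eBX⟩ := R.jStar.nonempty_iso_map_cone_of_isIso_map_left hB hW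
  obtain ⟨eBY⟩ := R.iShriek.nonempty_iso_map_cone_of_isIso_map_right hB hA
  refine ⟨A, B, u ≫ w, g, h, ⟨?_, ?_⟩, ⟨?_, ?_⟩, hB⟩
  · exact hX.isoClosed_left (asIso (R.jStar.map u) ≪≫ eW).symm hx₁
  · exact hY.isoClosed_left eA.symm hy₁
  · exact hX.isoClosed_right (eBX ≪≫ asIso (R.adj_j₂.counit.app x₂)).symm hx₂
  · exact hY.isoClosed_right (asIso (R.adj_i₂.unit.app y₂) ≪≫ eBY.symm) hy₂

end Glueing.Recollement

open Glueing CategoryTheory Limits Pretriangulated in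
/-- Glueing of torsion pairs along a recollement: given torsion pairs `(X', X'')` in `X`
and `(Y', Y'')` in `Y`, the pair `D' = {Z : j^*Z ∈ X', i^*Z ∈ Y'}`,
`D'' = {Z : j^*Z ∈ X'', i^!Z ∈ Y''}` is a torsion pair in `D`. -/
theorem glued_torsionPair
    {D Y X : Type*} [Category D] [HasZeroObject D] [Preadditive D] [HasShift D ℤ]
    [∀ n : ℤ, (shiftFunctor D n).Additive] [Pretriangulated D]
    [Category Y] [HasZeroObject Y] [Preadditive Y] [HasShift Y ℤ]
    [∀ n : ℤ, (shiftFunctor Y n).Additive] [Pretriangulated Y]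
    [Category X] [HasZeroObject X] [Preadditive X] [HasShift X ℤ]
    [∀ n : ℤ, (shiftFunctor X n).Additive] [Pretriangulated X]
    (R : Recollement D Y X)
    {PX QX : X → Prop} {PY QY : Y → Prop}
    (hX : IsTorsionPair X PX QX) (hY : IsTorsionPair Y PY QY) :
    IsTorsionPair D
      (fun Z => PX (R.jStar.obj Z) ∧ PY (R.iStar.obj Z))
      (fun Z => QX (R.jStar.obj Z) ∧ QY (R.iShriek.obj Z)) := by
  refine ⟨fun e hZ => ?_, fun e hZ => ?_, fun i r hir hB => ?_, fun i r hir hB => ?_,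
    fun hA hB f => ?_, R.exists_distTriang_glued hX hY⟩
  · exact ⟨hX.isoClosed_left (R.jStar.mapIso e) hZ.1, hY.isoClosed_left (R.iStar.mapIso e) hZ.2⟩
  · exact ⟨hX.isoClosed_right (R.jStar.mapIso e) hZ.1,
      hY.isoClosed_right (R.iShriek.mapIso e) hZ.2⟩
  · exact ⟨hX.summands_left _ _ (R.jStar.map_comp_map_eq_id hir) hB.1,
      hY.summands_left _ _ (R.iStar.map_comp_map_eq_id hir) hB.2⟩
  · exact ⟨hX.summands_right _ _ (R.jStar.map_comp_map_eq_id hir) hB.1,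
      hY.summands_right _ _ (R.iShriek.map_comp_map_eq_id hir) hB.2⟩
  · exact R.eq_zero_of_forall_jStar_of_forall_iStar_iShriek (hX.orthogonal hA.1 hB.1)
      (hY.orthogonal hA.2 hB.2) f
end

section
/- With notation as in the glueing construction (K_X defined by the triangle i_*β_{≥1}i^!j_!X → j_!X → K_X → (i_*β_{≥1}i^!j_!X)[1]), there is a triangle i_*β_{≤0}i^!j_!X → K_X → j_*X → (i_*β_{≤0}i^!j_!X)[1] in D. -/
open CategoryTheory Limits Pretriangulated

/-! The adjoint transpose `i_*β_{≥1}M → j_!X₀` of `β_{≥1}M → M = i^!j_!X₀` is `i_*` of that map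
followed by the counit `i_*M → j_!X₀`. The octahedral axiom for this composite relates the cones
`i_*β_{≤0}M`, `K` and `j_*j^*j_!X₀ ≅ j_*X₀` of the three maps by a distinguished triangle. -/

open CategoryTheory Limits Pretriangulated

namespace CategoryTheory

variable {C : Type*} [Category C] [HasZeroObject C] [Preadditive C] [HasShift C ℤ]
  [∀ n : ℤ, (shiftFunctor C n).Additive] [Pretriangulated C]

lemma Pretriangulated.exists_distinguished_of_iso_obj₃ {A B Z Z' : C} {f : A ⟶ B}
    {g : B ⟶ Z} {h : Z ⟶ A⟦(1 : ℤ)⟧} (hT : Triangle.mk f g h ∈ distTriang C) (e : Z ≅ Z') :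
    ∃ (g' : B ⟶ Z') (h' : Z' ⟶ A⟦(1 : ℤ)⟧), Triangle.mk f g' h' ∈ distTriang C := by
  refine ⟨g ≫ e.hom, e.inv ≫ h, isomorphic_distinguished _ hT _
    (Triangle.isoMk _ _ (Iso.refl _) (Iso.refl _) e.symm ?_ ?_ ?_)⟩
  · show f ≫ 𝟙 B = 𝟙 A ≫ f
    simp
  · show (g ≫ e.hom) ≫ e.inv = 𝟙 B ≫ g
    simp
  · show (e.inv ≫ h) ≫ (𝟙 A)⟦(1 : ℤ)⟧' = e.inv ≫ h
    simp

lemma Triangulated.exists_distinguished_cones_of_comp [IsTriangulated C]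
    {X₁ X₂ X₃ Z₁₂ Z₂₃ Z₁₃ : C} {u₁₂ : X₁ ⟶ X₂} {u₂₃ : X₂ ⟶ X₃} {u₁₃ : X₁ ⟶ X₃}
    (comm : u₁₂ ≫ u₂₃ = u₁₃)
    {v₁₂ : X₂ ⟶ Z₁₂} {w₁₂ : Z₁₂ ⟶ X₁⟦(1 : ℤ)⟧} (h₁₂ : Triangle.mk u₁₂ v₁₂ w₁₂ ∈ distTriang C)
    {v₂₃ : X₃ ⟶ Z₂₃} {w₂₃ : Z₂₃ ⟶ X₂⟦(1 : ℤ)⟧} (h₂₃ : Triangle.mk u₂₃ v₂₃ w₂₃ ∈ distTriang C)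
    {v₁₃ : X₃ ⟶ Z₁₃} {w₁₃ : Z₁₃ ⟶ X₁⟦(1 : ℤ)⟧} (h₁₃ : Triangle.mk u₁₃ v₁₃ w₁₃ ∈ distTriang C) :
    ∃ (m₁ : Z₁₂ ⟶ Z₁₃) (m₃ : Z₁₃ ⟶ Z₂₃) (δ : Z₂₃ ⟶ Z₁₂⟦(1 : ℤ)⟧),
      Triangle.mk m₁ m₃ δ ∈ distTriang C :=
  let O := Triangulated.someOctahedron comm h₁₂ h₂₃ h₁₃
  ⟨O.m₁, O.m₃, _, O.mem⟩

end CategoryTheory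

namespace Glueing.Recollement

variable {D Y X : Type*} [Category D] [HasZeroObject D] [Preadditive D] [HasShift D ℤ]
  [∀ n : ℤ, (shiftFunctor D n).Additive] [Pretriangulated D]
  [Category Y] [HasZeroObject Y] [Preadditive Y] [HasShift Y ℤ]
  [∀ n : ℤ, (shiftFunctor Y n).Additive] [Pretriangulated Y]
  [Category X] [HasZeroObject X] [Preadditive X] [HasShift X ℤ]
  [∀ n : ℤ, (shiftFunctor X n).Additive] [Pretriangulated X]
  (R : Recollement D Y X)

/-- The first glueing triangle at `j_!X₀`; here `j_*j^*j_!X₀ ≅ j_*X₀` since `j_!` is fully faithful. -/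
lemma exists_distinguished_counit_jLower (X₀ : X) :
    ∃ (g : R.jLower.obj X₀ ⟶ R.jUpper.obj X₀)
      (δ : R.jUpper.obj X₀ ⟶ (R.iLower.obj (R.iShriek.obj (R.jLower.obj X₀)))⟦(1 : ℤ)⟧),
      Triangle.mk (R.adj_i₂.counit.app (R.jLower.obj X₀)) g δ ∈ distTriang D := by
  have := R.jLower_full
  have := R.jLower_faithful
  obtain ⟨δ, hT⟩ := R.triangle₁ (R.jLower.obj X₀)
  exact exists_distinguished_of_iso_obj₃ hT (R.jUpper.mapIso (asIso (R.adj_j₁.unit.app X₀)).symm)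

end Glueing.Recollement

open Glueing CategoryTheory Limits Pretriangulated in
/-- With `K` defined by the triangle `i_*β_{≥1}i^!j_!X₀ → j_!X₀ → K → ⋯` as in the
glueing construction, there is a triangle `i_*β_{≤0}i^!j_!X₀ → K → j_*X₀ → ⋯` in `D`. -/
theorem glued_silting_second_triangle
    {D Y X : Type*} [Category D] [HasZeroObject D] [Preadditive D] [HasShift D ℤ]
    [∀ n : ℤ, (shiftFunctor D n).Additive] [Pretriangulated D]
    [Category Y] [HasZeroObject Y] [Preadditive Y] [HasShift Y ℤ]
    [∀ n : ℤ, (shiftFunctor Y n).Additive] [Pretriangulated Y]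
    [Category X] [HasZeroObject X] [Preadditive X] [HasShift X ℤ]
    [∀ n : ℤ, (shiftFunctor X n).Additive] [Pretriangulated X]
    [IsTriangulated D]
    (R : Recollement D Y X)
    {XGe XLe : X → Prop} {YGe YLe : Y → Prop}
    (hX : IsCoTStructure X XGe XLe) (hY : IsCoTStructure Y YGe YLe)
    {X₀ : X}
    {B₁ B₀ : Y} (hB₁ : YGe (B₁⟦(1 : ℤ)⟧)) (hB₀ : YLe B₀)
    {u : B₁ ⟶ R.iShriek.obj (R.jLower.obj X₀)}
    {v : R.iShriek.obj (R.jLower.obj X₀) ⟶ B₀} {w : B₀ ⟶ B₁⟦(1 : ℤ)⟧}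
    (hTrunc : Triangle.mk u v w ∈ distinguishedTriangles)
    {K : D} {g : R.jLower.obj X₀ ⟶ K} {h : K ⟶ (R.iLower.obj B₁)⟦(1 : ℤ)⟧}
    (hK : Triangle.mk ((R.adj_i₂.homEquiv B₁ (R.jLower.obj X₀)).symm u) g h ∈
      distinguishedTriangles) :
    ∃ (a : R.iLower.obj B₀ ⟶ K) (b : K ⟶ R.jUpper.obj X₀)
      (c : R.jUpper.obj X₀ ⟶ (R.iLower.obj B₀)⟦(1 : ℤ)⟧),
      Triangle.mk a b c ∈ distinguishedTriangles := by
  let _ := R.commShift_iLower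
  obtain ⟨_, _, hCounit⟩ := R.exists_distinguished_counit_jLower X₀
  exact Triangulated.exists_distinguished_cones_of_comp
    (R.adj_i₂.homEquiv_counit B₁ (R.jLower.obj X₀) u).symm
    (R.isTriangulated_iLower.map_distinguished _ hTrunc) hCounit hK
end

section
/- Let D be a triangulated category with a recollement by Y and X, with glued co-t-structure (D_{≥0}, D_{≤0}) from co-t-structures on Y and X. Let K_X be as in the glueing construction. Then K_X is a right (D_{≥0} ∩ D_{≤0})-approximation of j_*X: every morphism from an object of the co-heart D_{≥0} ∩ D_{≤0} to j_*X factors through the canonical map K_X → j_*X. -/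
open CategoryTheory Limits Pretriangulated

theorem CategoryTheory.Adjunction.hom_eq_zero_of_isZero_obj {C E : Type*} [Category C]
    [Category E] [HasZeroMorphisms E] {F : C ⥤ E} {G : E ⥤ C} (adj : F ⊣ G)
    {A : C} {Z : E} (hZ : IsZero (G.obj Z)) (g : F.obj A ⟶ Z) : g = 0 :=
  (adj.homEquiv A Z).injective (hZ.eq_of_tgt _ _)

namespace Glueing

section CoTStructure

variable {D : Type*} [Category D] [HasZeroObject D] [Preadditive D] [HasShift D ℤ]
  [∀ n : ℤ, (shiftFunctor D n).Additive] [Pretriangulated D] {Ge Le : D → Prop}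

theorem IsCoTStructure.hom_shift_one_eq_zero (h : IsCoTStructure D Ge Le) {A B : D} (hA : Ge A)
    (hB : Le B) (f : A ⟶ B⟦(1 : ℤ)⟧) : f = 0 :=
  h.orthogonal hA (h.isoClosed_le (shiftShiftNeg B (1 : ℤ)).symm hB) f

end CoTStructure

namespace Recollement

variable {D Y X : Type*} [Category D] [HasZeroObject D] [Preadditive D] [HasShift D ℤ]
  [∀ n : ℤ, (shiftFunctor D n).Additive] [Pretriangulated D]
  [Category Y] [HasZeroObject Y] [Preadditive Y] [HasShift Y ℤ]
  [∀ n : ℤ, (shiftFunctor Y n).Additive] [Pretriangulated Y]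
  [Category X] [HasZeroObject X] [Preadditive X] [HasShift X ℤ]
  [∀ n : ℤ, (shiftFunctor X n).Additive] [Pretriangulated X]
  (R : Recollement D Y X)

theorem isZero_jStar_shift_iLower (B : Y) (n : ℤ) :
    IsZero (R.jStar.obj ((R.iLower.obj B)⟦n⟧)) :=
  letI := R.commShift_iLower
  (R.jStar_iLower_zero (B⟦n⟧)).of_iso (R.jStar.mapIso ((R.iLower.commShiftIso n).app B)).symm

theorem iLower_hom_shift_eq_zero {YGe YLe : Y → Prop} (hY : IsCoTStructure Y YGe YLe) {A B : Y}
    (hA : YGe A) (hB : YLe B) (k : R.iLower.obj A ⟶ (R.iLower.obj B)⟦(1 : ℤ)⟧) : k = 0 := by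
  let := R.commShift_iLower
  let := R.iLower_full
  let e := (R.iLower.commShiftIso (1 : ℤ)).app B
  obtain ⟨k', hk'⟩ := R.iLower.map_surjective (k ≫ e.inv)
  have hk'0 : k' = 0 := hY.hom_shift_one_eq_zero hA hB k'
  rw [← cancel_mono e.inv, ← hk', hk'0, Functor.map_zero, zero_comp]

/-- Through the triangle `j_!j^*C → C → i_*i^*C → ⋯`: the first map is killed by adjunction, as
`j^*` vanishes on `i_*`, and the induced map out of `i_*i^*C` by the co-t-structure on `Y`. -/
theorem hom_shift_iLower_eq_zero {YGe YLe : Y → Prop} (hY : IsCoTStructure Y YGe YLe) {C : D}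
    (hC : YGe (R.iStar.obj C)) {B : Y} (hB : YLe B) (g : C ⟶ (R.iLower.obj B)⟦(1 : ℤ)⟧) :
    g = 0 := by
  obtain ⟨δ, hT⟩ := R.triangle₂ C
  have hε : R.adj_j₁.counit.app C ≫ g = 0 :=
    R.adj_j₁.hom_eq_zero_of_isZero_obj (R.isZero_jStar_shift_iLower B 1) _
  obtain ⟨k, rfl⟩ := Triangle.yoneda_exact₂ _ hT g hε
  rw [R.iLower_hom_shift_eq_zero hY hC hB k]
  exact comp_zero

end Recollement

end Glueing

open Glueing CategoryTheory Limits Pretriangulated in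
/-- `K` (sitting in a triangle `i_*β_{≤0}i^!j_!X₀ → K → j_*X₀ → ⋯`) is a right
approximation of `j_*X₀` by the co-heart of the glued co-t-structure: every morphism
from an object of the co-heart to `j_*X₀` factors through `b : K ⟶ j_*X₀`. -/
theorem glued_silting_right_approximation
    {D Y X : Type*} [Category D] [HasZeroObject D] [Preadditive D] [HasShift D ℤ]
    [∀ n : ℤ, (shiftFunctor D n).Additive] [Pretriangulated D]
    [Category Y] [HasZeroObject Y] [Preadditive Y] [HasShift Y ℤ]
    [∀ n : ℤ, (shiftFunctor Y n).Additive] [Pretriangulated Y]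
    [Category X] [HasZeroObject X] [Preadditive X] [HasShift X ℤ]
    [∀ n : ℤ, (shiftFunctor X n).Additive] [Pretriangulated X]
    (R : Recollement D Y X)
    {XGe XLe : X → Prop} {YGe YLe : Y → Prop}
    (hX : IsCoTStructure X XGe XLe) (hY : IsCoTStructure Y YGe YLe)
    {X₀ : X} {Y₀ : Y} (hsX : IsSilting X X₀) (hsY : IsSilting Y Y₀)
    (hX₀ : XGe X₀ ∧ XLe X₀) (hY₀ : YGe Y₀ ∧ YLe Y₀)
    {B₀ : Y} (hB₀ : YLe B₀)
    {K : D} {a : R.iLower.obj B₀ ⟶ K} {b : K ⟶ R.jUpper.obj X₀}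
    {c : R.jUpper.obj X₀ ⟶ (R.iLower.obj B₀)⟦(1 : ℤ)⟧}
    (hT : Triangle.mk a b c ∈ distinguishedTriangles) :
    ∀ C : D, (XGe (R.jStar.obj C) ∧ YGe (R.iStar.obj C)) →
      (XLe (R.jStar.obj C) ∧ YLe (R.iShriek.obj C)) →
      ∀ f : C ⟶ R.jUpper.obj X₀, ∃ f' : C ⟶ K, f' ≫ b = f := by
  intro C hGe _ f
  obtain ⟨f', hf'⟩ := Triangle.coyoneda_exact₃ _ hT f (R.hom_shift_iLower_eq_zero hY hGe.2 hB₀ _)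
  exact ⟨f', hf'.symm⟩
end

section
/- Let D be a triangulated category with a recollement by Y and X, with glued co-t-structure (D_{≥0}, D_{≤0}). Suppose L is an object of D with j^*L ≅ X, i^*L ∈ Y_{≥0}, and i^!L ∈ Y_{≤0}, where X is the silting object of X. Then L is a right (D_{≥0} ∩ D_{≤0})-approximation of j_*X: every map from an object of the co-heart to j_*X factors through the canonical map L → j_*X (coming from the unit of the adjunction (j^*, j_*)). -/
open CategoryTheory Limits Pretriangulated

/-!
A map `C → j_*X₀ ≅ j_*j^*L` lifts along `L → j_*j^*L` as soon as its composite with the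
connecting map `j_*j^*L → i_*i^!L[1]` of the glueing triangle vanishes. By the adjunction
`i^* ⊣ i_*`, that composite corresponds to a map `i^*C → (i^!L)[1]`, which is zero by the
orthogonality of the co-t-structure on `Y`, since `i^*C ∈ Y_{≥0}` and `i^!L ∈ Y_{≤0}`.
-/

namespace Glueing.Recollement

variable {D Y X : Type*} [Category D] [HasZeroObject D] [Preadditive D] [HasShift D ℤ]
  [∀ n : ℤ, (shiftFunctor D n).Additive] [Pretriangulated D]
  [Category Y] [HasZeroObject Y] [Preadditive Y] [HasShift Y ℤ]
  [∀ n : ℤ, (shiftFunctor Y n).Additive] [Pretriangulated Y]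
  [Category X] [HasZeroObject X] [Preadditive X] [HasShift X ℤ]
  [∀ n : ℤ, (shiftFunctor X n).Additive] [Pretriangulated X]
  (R : Recollement D Y X) {YGe YLe : Y → Prop}

theorem eq_zero_of_hom_iLower (hY : IsCoTStructure Y YGe YLe) {C : D} {B : Y}
    (hC : YGe (R.iStar.obj C)) (hB : YLe (B⟦(-1 : ℤ)⟧)) (g : C ⟶ R.iLower.obj B) :
    g = 0 := by
  let _ := R.commShift_iStar
  have := R.isTriangulated_iStar
  apply (R.adj_i₁.homEquiv C B).symm.injective
  rw [hY.orthogonal hC hB ((R.adj_i₁.homEquiv C B).symm g), R.adj_i₁.homAddEquiv_symm_zero]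

theorem eq_zero_of_hom_iLower_shift (hY : IsCoTStructure Y YGe YLe) {C : D} {B : Y}
    (hC : YGe (R.iStar.obj C)) (hB : YLe B) (g : C ⟶ (R.iLower.obj B)⟦(1 : ℤ)⟧) :
    g = 0 := by
  let _ := R.commShift_iLower
  have hB' : YLe (B⟦(1 : ℤ)⟧⟦(-1 : ℤ)⟧) :=
    hY.isoClosed_le ((shiftFunctorCompIsoId Y (1 : ℤ) (-1) (by norm_num)).app B).symm hB
  rw [← cancel_mono ((R.iLower.commShiftIso (1 : ℤ)).inv.app B), zero_comp]
  exact R.eq_zero_of_hom_iLower hY hC hB' _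

theorem exists_comp_unit_jStar_eq (hY : IsCoTStructure Y YGe YLe) {C L : D}
    (hC : YGe (R.iStar.obj C)) (hL : YLe (R.iShriek.obj L))
    (g : C ⟶ R.jUpper.obj (R.jStar.obj L)) :
    ∃ f : C ⟶ L, f ≫ R.adj_j₂.unit.app L = g := by
  obtain ⟨δ, hT⟩ := R.triangle₁ L
  obtain ⟨f, hf⟩ :=
    Triangle.coyoneda_exact₃ _ hT g (R.eq_zero_of_hom_iLower_shift hY hC hL _)
  exact ⟨f, hf.symm⟩

end Glueing.Recollement

open Glueing CategoryTheory Limits Pretriangulated in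
/-- If `L` satisfies `j^*L ≅ X₀`, `i^*L ∈ Y_{≥0}` and `i^!L ∈ Y_{≤0}`, then `L` is a
right approximation of `j_*X₀` by the co-heart of the glued co-t-structure: every map
from an object of the co-heart to `j_*X₀` factors through the canonical map
`L → j_*j^*L ≅ j_*X₀` coming from the unit of the adjunction `(j^*, j_*)`. -/
theorem coheart_approximation_of_conditions
    {D Y X : Type*} [Category D] [HasZeroObject D] [Preadditive D] [HasShift D ℤ]
    [∀ n : ℤ, (shiftFunctor D n).Additive] [Pretriangulated D]
    [Category Y] [HasZeroObject Y] [Preadditive Y] [HasShift Y ℤ]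
    [∀ n : ℤ, (shiftFunctor Y n).Additive] [Pretriangulated Y]
    [Category X] [HasZeroObject X] [Preadditive X] [HasShift X ℤ]
    [∀ n : ℤ, (shiftFunctor X n).Additive] [Pretriangulated X]
    (R : Recollement D Y X)
    {XGe XLe : X → Prop} {YGe YLe : Y → Prop}
    (hX : IsCoTStructure X XGe XLe) (hY : IsCoTStructure Y YGe YLe)
    {X₀ : X} {Y₀ : Y} (hsX : IsSilting X X₀) (hsY : IsSilting Y Y₀)
    (hX₀ : XGe X₀ ∧ XLe X₀) (hY₀ : YGe Y₀ ∧ YLe Y₀)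
    {L : D} (e : R.jStar.obj L ≅ X₀)
    (hLge : YGe (R.iStar.obj L)) (hLle : YLe (R.iShriek.obj L)) :
    ∀ C : D, (XGe (R.jStar.obj C) ∧ YGe (R.iStar.obj C)) →
      (XLe (R.jStar.obj C) ∧ YLe (R.iShriek.obj C)) →
      ∀ f : C ⟶ R.jUpper.obj X₀,
        ∃ f' : C ⟶ L, f' ≫ (R.adj_j₂.unit.app L ≫ R.jUpper.map e.hom) = f := by
  intro C hCge _ f
  obtain ⟨f', hf'⟩ := R.exists_comp_unit_jStar_eq hY hCge.2 hLle (f ≫ R.jUpper.map e.inv)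
  refine ⟨f', ?_⟩
  rw [← Category.assoc, hf', Category.assoc, ← Functor.map_comp, e.inv_hom_id,
    CategoryTheory.Functor.map_id, Category.comp_id]
end

section
/- Let D be a triangulated category, (D^{≤0}, D^{≥0}) a bounded t-structure on D with a Serre functor S on D. Suppose the t-structure is associated with a silting object T, meaning D^{≤0} = {Z : Hom(T, Z[i]) = 0 ∀ i > 0} and D^{≥0} = {Z : Hom(T, Z[i]) = 0 ∀ i < 0}. If S(T) lies in the heart D^{≤0} ∩ D^{≥0}, then T is tilting, i.e. Hom(T, T[k]) = 0 for all k ≠ 0. -/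
open CategoryTheory Limits Pretriangulated

/-!
Positive self-extensions of `T` vanish because `T` is silting. For `k < 0`, Serre duality
and the shift adjunction give `Hom(T, T[k]) ≅ D Hom(T[k], S T) ≅ D Hom(T, (S T)[-k])`, and
the last space vanishes because `S T ∈ D^{≤0}` and `-k > 0`.
-/

theorem LinearEquiv.eq_zero_of_dual_trivial {R V W : Type*} [CommSemiring R]
    [AddCommMonoid V] [Module R V] [AddCommMonoid W] [Module R W]
    (e : V ≃ₗ[R] Module.Dual R W) (h : ∀ w : W, w = 0) (v : V) : v = 0 :=
  e.map_eq_zero_iff.mp (LinearMap.ext fun w => by rw [h w, map_zero, map_zero])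

theorem CategoryTheory.shift_hom_eq_zero {D : Type*} [Category D] [Preadditive D] [HasShift D ℤ]
    [∀ n : ℤ, (shiftFunctor D n).Additive] {A B : D} {k : ℤ}
    (h : ∀ g : A ⟶ B⟦-k⟧, g = 0) (g : A⟦k⟧ ⟶ B) : g = 0 :=
  ((shiftEquiv D k).toAdjunction.homEquiv A B).injective ((h _).trans (h _).symm)

open Glueing CategoryTheory Limits Pretriangulated in
/-- Let `T` be a silting object of a triangulated category `D` with Serre functor `S`,
with associated (bounded) t-structure `D^{≤0} = {Z : Hom(T, Z[i]) = 0 ∀ i > 0}`,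
`D^{≥0} = {Z : Hom(T, Z[i]) = 0 ∀ i < 0}`. If `S(T)` lies in the heart, then `T` is
tilting, i.e. `Hom(T, T[k]) = 0` for all `k ≠ 0`. -/
theorem tilting_of_serre_mem_heart
    {K : Type*} [Field K]
    {D : Type*} [Category D] [HasZeroObject D] [Preadditive D] [Linear K D] [HasShift D ℤ]
    [∀ n : ℤ, (shiftFunctor D n).Additive] [Pretriangulated D]
    [∀ A B : D, FiniteDimensional K (A ⟶ B)]
    (S : D ⥤ D) [S.IsEquivalence]
    (serre : ∀ A B : D, (A ⟶ B) ≃ₗ[K] Module.Dual K (B ⟶ S.obj A))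
    (T : D) (hT : IsSilting D T)
    (ht : IsTStructure D (fun Z => ∀ i : ℤ, 0 < i → ∀ f : T ⟶ Z⟦i⟧, f = 0)
      (fun Z => ∀ i : ℤ, i < 0 → ∀ f : T ⟶ Z⟦i⟧, f = 0))
    (hbounded : ∀ Z : D,
      (∃ n : ℤ, ∀ i : ℤ, 0 < i → ∀ f : T ⟶ (Z⟦n⟧)⟦i⟧, f = 0) ∧
      (∃ n : ℤ, ∀ i : ℤ, i < 0 → ∀ f : T ⟶ (Z⟦n⟧)⟦i⟧, f = 0))
    (hheart : (∀ i : ℤ, 0 < i → ∀ f : T ⟶ (S.obj T)⟦i⟧, f = 0) ∧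
      (∀ i : ℤ, i < 0 → ∀ f : T ⟶ (S.obj T)⟦i⟧, f = 0)) :
    ∀ k : ℤ, k ≠ 0 → ∀ f : T ⟶ T⟦k⟧, f = 0 := by
  intro k hk f
  obtain hneg | hpos := hk.lt_or_gt
  · exact (serre T (T⟦k⟧)).eq_zero_of_dual_trivial
      (shift_hom_eq_zero (hheart.1 (-k) (by omega))) f
  · exact hT.1 k hpos f
end

section
/- Let A be an abelian category arising as the heart of a glued t-structure in a recollement situation, with the induced recollement of abelian categories (functors ᵖi^*, ᵖi_*, ᵖi^!, ᵖj_!, ᵖj^*, ᵖj_*). Let (T, F) be a torsion pair in A. Then (ᵖi^*(T), ᵖi^!(F)) is a torsion pair in the abelian category A_Y. -/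
open CategoryTheory Limits

namespace Glueing

attribute [local instance] CategoryTheory.Limits.HasFiniteBiproducts.of_hasFiniteProducts


/-- A torsion pair `(T, F)` in an abelian category: both classes are closed under
isomorphisms, `Hom(T, F) = 0`, and every object is an extension of a torsion-free
object by a torsion object. -/
structure AbTorsionPair {A : Type*} [Category A] [Abelian A] (T F : A → Prop) : Prop where
  isoClosed_t : ∀ {X Y : A}, (X ≅ Y) → T X → T Y
  isoClosed_f : ∀ {X Y : A}, (X ≅ Y) → F X → F Y
  orthogonal : ∀ {X Y : A}, T X → F Y → ∀ f : X ⟶ Y, f = 0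
  exists_ses : ∀ M : A, ∃ (X Y : A) (f : X ⟶ M) (g : M ⟶ Y) (w : f ≫ g = 0),
    T X ∧ F Y ∧ Mono f ∧ Epi g ∧ (ShortComplex.mk f g w).Exact

variable (AY AD AX : Type*) [Category AY] [Abelian AY] [Category AD] [Abelian AD]
  [Category AX] [Abelian AX]

/-- A recollement of abelian categories `A_Y → A_D → A_X`: adjoint triples
`ᵖi^* ⊣ ᵖi_* ⊣ ᵖi^!` and `ᵖj_! ⊣ ᵖj^* ⊣ ᵖj_*`, with `ᵖi_*` fully faithful and exact,
`ᵖj^*` exact, `ᵖj^*ᵖi_* = 0`, `ᵖi^*ᵖj_! = 0`, `ᵖj^*ᵖj_! ≅ id ≅ ᵖj^*ᵖj_*`,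
`ᵖi_*(A_Y)` a Serre subcategory, and the two canonical four-term exact sequences
(encoded by exactness at the middle together with epi/mono conditions). -/
structure AbRecollement where
  piStar : AD ⥤ AY
  piLower : AY ⥤ AD
  piShriek : AD ⥤ AY
  pjLower : AX ⥤ AD
  pjStar : AD ⥤ AX
  pjUpper : AX ⥤ AD
  adj_i₁ : piStar ⊣ piLower
  adj_i₂ : piLower ⊣ piShriek
  adj_j₁ : pjLower ⊣ pjStar
  adj_j₂ : pjStar ⊣ pjUpper
  piLower_full : piLower.Full
  piLower_faithful : piLower.Faithful
  piLower_preservesFiniteLimits : PreservesFiniteLimits piLower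
  piLower_preservesFiniteColimits : PreservesFiniteColimits piLower
  pjStar_preservesFiniteLimits : PreservesFiniteLimits pjStar
  pjStar_preservesFiniteColimits : PreservesFiniteColimits pjStar
  pjStar_piLower_zero : ∀ A : AY, IsZero (pjStar.obj (piLower.obj A))
  piStar_pjLower_zero : ∀ B : AX, IsZero (piStar.obj (pjLower.obj B))
  unit_j₁_iso : IsIso adj_j₁.unit
  counit_j₂_iso : IsIso adj_j₂.counit
  serre : ∀ S : ShortComplex AD, S.ShortExact →
    (piLower.essImage S.X₂ ↔ (piLower.essImage S.X₁ ∧ piLower.essImage S.X₃))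
  epi_unit_i₁ : ∀ A : AD, Epi (adj_i₁.unit.app A)
  mono_counit_i₂ : ∀ A : AD, Mono (adj_i₂.counit.app A)
  comp_zero₁ : ∀ A : AD, adj_j₁.counit.app A ≫ adj_i₁.unit.app A = 0
  exact₁ : ∀ A : AD, (ShortComplex.mk _ _ (comp_zero₁ A)).Exact
  comp_zero₂ : ∀ A : AD, adj_i₂.counit.app A ≫ adj_j₂.unit.app A = 0
  exact₂ : ∀ A : AD, (ShortComplex.mk _ _ (comp_zero₂ A)).Exact

/-- `B` lies in the additive closure `add M`: it is a direct summand of a finite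
direct sum of copies of `M`. -/
def InAdd {A : Type*} [Category A] [Abelian A] (M B : A) : Prop :=
  letI : HasFiniteBiproducts A := HasFiniteBiproducts.of_hasFiniteProducts
  ∃ (n : ℕ) (s : B ⟶ ⨁ fun _ : Fin n => M) (r : (⨁ fun _ : Fin n => M) ⟶ B),
    s ≫ r = 𝟙 B

end Glueing

/-! For `B ∈ A_Y`, take the torsion sequence `0 → X → ᵖi_*B → Y → 0` in `A_D`. By the Serre
property `X` and `Y` lie in the image of `ᵖi_*`, and since `ᵖi_*` is fully faithful and exact the
sequence descends to `A_Y`; its ends are `ᵖi^*X` and `ᵖi^!Y`, because the counit of `ᵖi^* ⊣ ᵖi_*`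
and the unit of `ᵖi_* ⊣ ᵖi^!` are isomorphisms. For orthogonality, a map `ᵖi^*A → ᵖi^!A'` is
adjoint to a map `ᵖi_*ᵖi^*A → A'`, which vanishes since its composite with the epimorphic unit
`A → ᵖi_*ᵖi^*A` goes from `T` to `F`. -/

theorem CategoryTheory.Adjunction.eq_zero_of_epi_unit {C D : Type*} [Category C] [Category D]
    [HasZeroMorphisms C] [HasZeroMorphisms D] {L : C ⥤ D} {G : D ⥤ C} {R : C ⥤ D}
    (adj₁ : L ⊣ G) (adj₂ : G ⊣ R) [R.PreservesZeroMorphisms] {A B : C}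
    [Epi (adj₁.unit.app A)] (hAB : ∀ φ : A ⟶ B, φ = 0) (f : L.obj A ⟶ R.obj B) : f = 0 := by
  have hf : (adj₂.homEquiv _ _).symm f = 0 := by
    rw [← cancel_epi (adj₁.unit.app A), comp_zero]
    exact hAB _
  rw [← (adj₂.homEquiv _ _).apply_symm_apply f, hf, Adjunction.homEquiv_unit,
    Functor.map_zero, comp_zero]

theorem CategoryTheory.Functor.exists_shortExact_of_isos {C D : Type*} [Category C] [Abelian C]
    [Category D] [Abelian D] (G : C ⥤ D) [G.Full] [G.Faithful] [G.PreservesZeroMorphisms]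
    {S : ShortComplex D} (hS : S.ShortExact) {X₁ X₂ X₃ : C}
    (e₁ : G.obj X₁ ≅ S.X₁) (e₂ : G.obj X₂ ≅ S.X₂) (e₃ : G.obj X₃ ≅ S.X₃) :
    ∃ (f : X₁ ⟶ X₂) (g : X₂ ⟶ X₃) (w : f ≫ g = 0), (ShortComplex.mk f g w).ShortExact := by
  let f := G.preimage (e₁.hom ≫ S.f ≫ e₂.inv)
  let g := G.preimage (e₂.hom ≫ S.g ≫ e₃.inv)
  have w : f ≫ g = 0 := G.map_injective (by simp [f, g])
  have comm₁₂ : e₁.hom ≫ S.f = G.map f ≫ e₂.hom := by simp [f]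
  have comm₂₃ : e₂.hom ≫ S.g = G.map g ≫ e₃.hom := by simp [g]
  let e : (ShortComplex.mk f g w).map G ≅ S := ShortComplex.isoMk e₁ e₂ e₃ comm₁₂ comm₂₃
  exact ⟨f, g, w, ShortExact.reflects_shortExact_of_faithful G
    (ShortComplex.shortExact_of_iso e.symm hS)⟩

namespace Glueing.AbRecollement

variable {AY AD AX : Type*} [Category AY] [Abelian AY] [Category AD] [Abelian AD]
  [Category AX] [Abelian AX]

attribute [instance] piLower_full piLower_faithful

instance piLower_isLeftAdjoint (R : AbRecollement AY AD AX) : R.piLower.IsLeftAdjoint :=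
  ⟨_, ⟨R.adj_i₂⟩⟩

instance piShriek_isRightAdjoint (R : AbRecollement AY AD AX) : R.piShriek.IsRightAdjoint :=
  ⟨_, ⟨R.adj_i₂⟩⟩

noncomputable def piStarPiLowerIso (R : AbRecollement AY AD AX) (X : AY) :
    R.piStar.obj (R.piLower.obj X) ≅ X :=
  asIso (R.adj_i₁.counit.app X)

noncomputable def piShriekPiLowerIso (R : AbRecollement AY AD AX) (X : AY) :
    R.piShriek.obj (R.piLower.obj X) ≅ X :=
  (asIso (R.adj_i₂.unit.app X)).symm

end Glueing.AbRecollement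

open Glueing CategoryTheory Limits in
/-- Restriction of a torsion pair along a recollement of abelian categories: if
`(T, F)` is a torsion pair in `A_D`, then `(ᵖi^*(T), ᵖi^!(F))` is a torsion pair
in `A_Y` (image classes taken up to isomorphism). -/
theorem abRecollement_restrict_torsionPair
    {AY AD AX : Type*} [Category AY] [Abelian AY] [Category AD] [Abelian AD]
    [Category AX] [Abelian AX]
    (R : Glueing.AbRecollement AY AD AX)
    {T F : AD → Prop} (h : AbTorsionPair T F) :
    AbTorsionPair (fun B : AY => ∃ A : AD, T A ∧ Nonempty (R.piStar.obj A ≅ B))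
      (fun B : AY => ∃ A : AD, F A ∧ Nonempty (R.piShriek.obj A ≅ B)) := by
  refine ⟨fun e hB => (ObjectProperty.map T R.piStar).prop_of_iso e hB,
    fun e hB => (ObjectProperty.map F R.piShriek).prop_of_iso e hB, ?_, ?_⟩
  · rintro X Y ⟨A, hA, ⟨i⟩⟩ ⟨A', hA', ⟨i'⟩⟩ f
    have := R.epi_unit_i₁ A
    have h₀ : i.hom ≫ f ≫ i'.inv = 0 :=
      R.adj_i₁.eq_zero_of_epi_unit R.adj_i₂ (h.orthogonal hA hA') _
    simpa using i.inv ≫= h₀ =≫ i'.hom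
  · intro M
    obtain ⟨X, Y, f, g, w, hX, hY, hf, hg, hex⟩ := h.exists_ses (R.piLower.obj M)
    have hS : (ShortComplex.mk f g w).ShortExact := { exact := hex, mono_f := hf, epi_g := hg }
    obtain ⟨⟨X', ⟨eX⟩⟩, ⟨Y', ⟨eY⟩⟩⟩ := (R.serre _ hS).mp (R.piLower.obj_mem_essImage M)
    obtain ⟨f', g', w', hS'⟩ := R.piLower.exists_shortExact_of_isos hS eX (Iso.refl _) eY
    exact ⟨X', Y', f', g', w',
      ⟨X, hX, ⟨R.piStar.mapIso eX.symm ≪≫ R.piStarPiLowerIso X'⟩⟩,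
      ⟨Y, hY, ⟨R.piShriek.mapIso eY.symm ≪≫ R.piShriekPiLowerIso Y'⟩⟩,
      hS'.mono_f, hS'.epi_g, hS'.exact⟩
end

section
/- With the abelian recollement as above and a torsion pair (T, F) in A_D, the following are equivalent: (i) (ᵖj^*(T), ᵖj^*(F)) is a torsion pair in A_X; (ii) ᵖj_!ᵖj^*(T) ⊆ T; (iii) ᵖj_*ᵖj^*(F) ⊆ F. -/
open CategoryTheory Limits

namespace Glueing

attribute [local instance] CategoryTheory.Limits.HasFiniteBiproducts.of_hasFiniteProducts

variable (AY AD AX : Type*) [Category AY] [Abelian AY] [Category AD] [Abelian AD]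
  [Category AX] [Abelian AX]

end Glueing

/-! The proof of the equivalence runs through a fourth condition: `Hom(ᵖj^*T, ᵖj^*F) = 0`.
By the adjunctions this is `Hom(ᵖj_!ᵖj^*T, F) = 0`, resp. `Hom(T, ᵖj_*ᵖj^*F) = 0`, which say (ii),
resp. (iii), because a torsion class is the left orthogonal of its torsion-free class and vice
versa. It is also equivalent to (i): since `ᵖj^*` is exact and essentially surjective
(`ᵖj^*ᵖj_! ≅ id`), it carries the torsion sequences of `A_D` to short exact sequences in `A_X`. -/

namespace CategoryTheory

variable {C D : Type*} [Category C] [Category D]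

lemma Adjunction.forall_hom_eq_zero_iff [HasZeroMorphisms C] [HasZeroMorphisms D]
    {L : C ⥤ D} {R : D ⥤ C} (adj : L ⊣ R) (X : C) (Y : D) :
    (∀ f : L.obj X ⟶ Y, f = 0) ↔ ∀ g : X ⟶ R.obj Y, g = 0 := by
  have : R.IsRightAdjoint := adj.isRightAdjoint
  have hzero : adj.homEquiv X Y 0 = 0 := by
    rw [Adjunction.homEquiv_unit, Functor.map_zero, comp_zero]
  exact (adj.homEquiv X Y).forall_congr fun f => by
    rw [← hzero, (adj.homEquiv X Y).apply_eq_iff_eq]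

lemma Adjunction.essSurj_of_isIso_unit {L : C ⥤ D} {R : D ⥤ C} (adj : L ⊣ R)
    [IsIso adj.unit] : R.EssSurj where
  mem_essImage X := ⟨L.obj X, ⟨(asIso (adj.unit.app X)).symm⟩⟩

lemma ShortComplex.Exact.comp_iso_X₂ [HasZeroMorphisms C] {S : ShortComplex C} (hS : S.Exact)
    {M : C} (e : S.X₂ ≅ M) :
    (ShortComplex.mk (S.f ≫ e.hom) (e.inv ≫ S.g) (by simp)).Exact :=
  (ShortComplex.exact_iff_of_iso (ShortComplex.isoMk (S₁ := S)
    (S₂ := ShortComplex.mk (S.f ≫ e.hom) (e.inv ≫ S.g) (by simp))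
    (Iso.refl _) e (Iso.refl _) (by simp) (by simp))).1 hS

end CategoryTheory

namespace Glueing.AbTorsionPair

variable {C D : Type*} [Category C] [Abelian C] [Category D] [Abelian D] {T F : C → Prop}

lemma torsion_iff_forall_hom_eq_zero (h : AbTorsionPair T F) (M : C) :
    T M ↔ ∀ Y, F Y → ∀ g : M ⟶ Y, g = 0 := by
  refine ⟨fun hM Y hY g => h.orthogonal hM hY g, fun hM => ?_⟩
  obtain ⟨X, Y, f, g, _, hX, hY, hf, -, hS⟩ := h.exists_ses M
  have : Epi f := hS.epi_f (hM Y hY g)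
  have : IsIso f := isIso_of_mono_of_epi f
  exact h.isoClosed_t (asIso f) hX

lemma torsionFree_iff_forall_hom_eq_zero (h : AbTorsionPair T F) (M : C) :
    F M ↔ ∀ X, T X → ∀ f : X ⟶ M, f = 0 := by
  refine ⟨fun hM X hX f => h.orthogonal hX hM f, fun hM => ?_⟩
  obtain ⟨X, Y, f, g, _, hX, hY, -, hg, hS⟩ := h.exists_ses M
  have : Mono g := hS.mono_g (hM X hX f)
  have : IsIso g := isIso_of_mono_of_epi g
  exact h.isoClosed_f (asIso g).symm hY

lemma map_iff_orthogonal (h : AbTorsionPair T F) (G : C ⥤ D) [PreservesFiniteLimits G]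
    [PreservesFiniteColimits G] [G.EssSurj] :
    AbTorsionPair (ObjectProperty.map T G) (ObjectProperty.map F G) ↔
      ∀ {X Y : C}, T X → F Y → ∀ f : G.obj X ⟶ G.obj Y, f = 0 := by
  refine ⟨fun hG X Y hX hY f =>
    hG.orthogonal (ObjectProperty.prop_map_obj T G hX) (ObjectProperty.prop_map_obj F G hY) f,
    fun horth => ⟨?_, ?_, ?_, fun M => ?_⟩⟩
  · rintro X Y e ⟨A, hA, ⟨e'⟩⟩
    exact ⟨A, hA, ⟨e' ≪≫ e⟩⟩
  · rintro X Y e ⟨A, hA, ⟨e'⟩⟩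
    exact ⟨A, hA, ⟨e' ≪≫ e⟩⟩
  · rintro X Y ⟨A, hA, ⟨eX⟩⟩ ⟨B, hB, ⟨eY⟩⟩ f
    simpa using eX.inv ≫= horth hA hB (eX.hom ≫ f ≫ eY.inv) =≫ eY.hom
  · obtain ⟨X, Y, f, g, _, hX, hY, hf, hg, hS⟩ := h.exists_ses (G.objPreimage M)
    exact ⟨G.obj X, G.obj Y, G.map f ≫ (G.objObjPreimageIso M).hom,
      (G.objObjPreimageIso M).inv ≫ G.map g, _, ObjectProperty.prop_map_obj T G hX,
      ObjectProperty.prop_map_obj F G hY, mono_comp _ _, epi_comp _ _,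
      (hS.map G).comp_iso_X₂ (G.objObjPreimageIso M)⟩

end Glueing.AbTorsionPair

namespace Glueing.AbRecollement

variable {AY AD AX : Type*} [Category AY] [Category AD] [Abelian AD] [Category AX]
  (R : AbRecollement AY AD AX) {T F : AD → Prop}

lemma pjLower_pjStar_torsion_iff [Abelian AX] (h : AbTorsionPair T F) :
    (∀ A, T A → T (R.pjLower.obj (R.pjStar.obj A))) ↔
      ∀ {A B : AD}, T A → F B → ∀ f : R.pjStar.obj A ⟶ R.pjStar.obj B, f = 0 := by
  simp_rw [h.torsion_iff_forall_hom_eq_zero, R.adj_j₁.forall_hom_eq_zero_iff]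
  exact ⟨fun hT A B hA hB => hT A hA B hB, fun horth A hA B hB => horth hA hB⟩

lemma pjUpper_pjStar_torsionFree_iff [Abelian AX] (h : AbTorsionPair T F) :
    (∀ B, F B → F (R.pjUpper.obj (R.pjStar.obj B))) ↔
      ∀ {A B : AD}, T A → F B → ∀ f : R.pjStar.obj A ⟶ R.pjStar.obj B, f = 0 := by
  simp_rw [h.torsionFree_iff_forall_hom_eq_zero, ← R.adj_j₂.forall_hom_eq_zero_iff]
  exact ⟨fun hF A B hA hB => hF B hB A hA, fun horth B hB A hA => horth hA hB⟩

lemma pjStar_essSurj : R.pjStar.EssSurj :=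
  have := R.unit_j₁_iso
  R.adj_j₁.essSurj_of_isIso_unit

end Glueing.AbRecollement

open Glueing CategoryTheory Limits in
theorem abRecollement_jStar_torsionPair_iff_general
    {AY AD AX : Type*} [Category AY] [Category AD] [Abelian AD]
    [Category AX] [Abelian AX]
    (R : Glueing.AbRecollement AY AD AX)
    {T F : AD → Prop} (h : AbTorsionPair T F) :
    (AbTorsionPair (fun B : AX => ∃ A : AD, T A ∧ Nonempty (R.pjStar.obj A ≅ B))
        (fun B : AX => ∃ A : AD, F A ∧ Nonempty (R.pjStar.obj A ≅ B)) ↔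
      (∀ A : AD, T A → T (R.pjLower.obj (R.pjStar.obj A)))) ∧
    ((∀ A : AD, T A → T (R.pjLower.obj (R.pjStar.obj A))) ↔
      (∀ A : AD, F A → F (R.pjUpper.obj (R.pjStar.obj A)))) := by
  have := R.pjStar_preservesFiniteLimits
  have := R.pjStar_preservesFiniteColimits
  have := R.pjStar_essSurj
  exact ⟨(h.map_iff_orthogonal R.pjStar).trans (R.pjLower_pjStar_torsion_iff h).symm,
    (R.pjLower_pjStar_torsion_iff h).trans (R.pjUpper_pjStar_torsionFree_iff h).symm⟩

open Glueing CategoryTheory Limits in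
/-- For a torsion pair `(T, F)` in `A_D` and a recollement of abelian categories,
the following are equivalent: (i) `(ᵖj^*(T), ᵖj^*(F))` is a torsion pair in `A_X`;
(ii) `ᵖj_!ᵖj^*(T) ⊆ T`; (iii) `ᵖj_*ᵖj^*(F) ⊆ F`. -/
theorem abRecollement_jStar_torsionPair_iff
    {AY AD AX : Type*} [Category AY] [Abelian AY] [Category AD] [Abelian AD]
    [Category AX] [Abelian AX]
    (R : Glueing.AbRecollement AY AD AX)
    {T F : AD → Prop} (h : AbTorsionPair T F) :
    (AbTorsionPair (fun B : AX => ∃ A : AD, T A ∧ Nonempty (R.pjStar.obj A ≅ B))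
        (fun B : AX => ∃ A : AD, F A ∧ Nonempty (R.pjStar.obj A ≅ B)) ↔
      (∀ A : AD, T A → T (R.pjLower.obj (R.pjStar.obj A)))) ∧
    ((∀ A : AD, T A → T (R.pjLower.obj (R.pjStar.obj A))) ↔
      (∀ A : AD, F A → F (R.pjUpper.obj (R.pjStar.obj A)))) :=
  abRecollement_jStar_torsionPair_iff_general R h
end

section
/- Let (D^{≤0}, D^{≥0}) be a bounded t-structure on a triangulated category D with heart A and cohomology functors H^i, and let (T, F) be a torsion pair in A. Define the HRS-tilt: D̃^{≤0} = {E : H^i(E) = 0 ∀ i > 0, H^0(E) ∈ T} and D̃^{≥0} = {E : H^i(E) = 0 ∀ i < -1, H^{-1}(E) ∈ F}. Then (D̃^{≤0}, D̃^{≥0}) is a t-structure on D and satisfies D^{≤-1} ⊆ D̃^{≤0} ⊆ D^{≤0}. -/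
open CategoryTheory Limits Pretriangulated

namespace Glueing

open CategoryTheory Limits Pretriangulated

variable {D : Type*} [Category D] [HasZeroObject D] [Preadditive D] [HasShift D ℤ]
  [∀ n : ℤ, (shiftFunctor D n).Additive] [Pretriangulated D]

/-- A torsion pair `(T, F)` in the heart of a t-structure `(Le, Ge)`, expressed inside
the ambient triangulated category: both classes consist of heart objects, are closed
under isomorphisms, are Hom-orthogonal, and every heart object is an extension (a
distinguished triangle) of an object of `F` by an object of `T`. -/
structure HeartTorsionPair (Le Ge T F : D → Prop) : Prop where
  mem_heart_t : ∀ A : D, T A → Le A ∧ Ge A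
  mem_heart_f : ∀ A : D, F A → Le A ∧ Ge A
  isoClosed_t : ∀ {A B : D}, (A ≅ B) → T A → T B
  isoClosed_f : ∀ {A B : D}, (A ≅ B) → F A → F B
  orthogonal : ∀ {A B : D}, T A → F B → ∀ f : A ⟶ B, f = 0
  exists_triangle : ∀ A : D, Le A → Ge A →
    ∃ (To Fo : D) (f : To ⟶ A) (g : A ⟶ Fo) (h : Fo ⟶ To⟦(1 : ℤ)⟧),
      T To ∧ F Fo ∧ Triangle.mk f g h ∈ distinguishedTriangles

/-- The aisle of the HRS-tilt of a t-structure `(Le, Ge)` with respect to a torsion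
pair `(T, F)` in its heart: `E ∈ D̃^{≤0}` iff `H^i(E) = 0` for `i > 0` and
`H^0(E) ∈ T`, i.e. iff there is a triangle `A → E → B → A[1]` with `A ∈ D^{≤-1}`
and `B` a heart object lying in `T`. -/
def TiltLe (Le Ge T : D → Prop) (E : D) : Prop :=
  ∃ (A B : D) (f : A ⟶ E) (g : E ⟶ B) (h : B ⟶ A⟦(1 : ℤ)⟧),
    Le (A⟦(-1 : ℤ)⟧) ∧ (Le B ∧ Ge B) ∧ T B ∧
      Triangle.mk f g h ∈ distinguishedTriangles

/-- The coaisle of the HRS-tilt of a t-structure `(Le, Ge)` with respect to a torsion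
pair `(T, F)` in its heart: `E ∈ D̃^{≥0}` iff `H^i(E) = 0` for `i < -1` and
`H^{-1}(E) ∈ F`, i.e. iff there is a triangle `A → E → B → A[1]` with `A[-1]` a heart
object lying in `F` and `B ∈ D^{≥0}`. -/
def TiltGe (Le Ge F : D → Prop) (E : D) : Prop :=
  ∃ (A B : D) (f : A ⟶ E) (g : E ⟶ B) (h : B ⟶ A⟦(1 : ℤ)⟧),
    (Le (A⟦(-1 : ℤ)⟧) ∧ Ge (A⟦(-1 : ℤ)⟧)) ∧ F (A⟦(-1 : ℤ)⟧) ∧ Ge B ∧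
      Triangle.mk f g h ∈ distinguishedTriangles

end Glueing

/-!
Both tilted classes are orthogonals of each other: `E ∈ D̃^{≤0}` iff `Hom(E, D̃^{≥1}) = 0`, and
`E ∈ D̃^{≥1}` iff `Hom(D̃^{≤0}, E) = 0`. This follows from the truncation triangles of the old
t-structure together with `T = ⊥F` and `F = T⊥` in the heart, while the orthogonality of the
tilted classes itself comes from `Hom(D^{≤-1}, D^{≥0}) = 0` and `Hom(T, F) = 0`. Closure under
isomorphisms, summands and shifts is then formal. For the truncation triangle of `Z`, take
`U → Z → V` with `U ∈ D^{≤-1}` and `V ∈ D^{≥0}`, let `t → V` be the torsion part of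
`H^0(Z) = τ^{≤0} V`, and let `C` be its cone and `A` the cocone of `Z → V → C`: then `A` is an
extension of `t` by `U`, so `A ∈ D̃^{≤0}`, and `C` is an extension of `τ^{≥1} V` by the free
part of `H^0(Z)`, so `C ∈ D̃^{≥1}`.
-/

namespace CategoryTheory.Pretriangulated

section Shift

variable {C : Type*} [Category C] [Preadditive C] [HasShift C ℤ]
  [∀ n : ℤ, (shiftFunctor C n).Additive]

lemma hom_shift_eq_zero_of_forall_hom_eq_zero {X Y : C} (h : ∀ f : X ⟶ Y, f = 0) (n : ℤ)
    (f : X⟦n⟧ ⟶ Y⟦n⟧) : f = 0 := by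
  obtain ⟨g, rfl⟩ := (shiftFunctor C n).map_surjective f
  rw [h g, Functor.map_zero]

lemma forall_shift_one_hom_eq_zero_iff {X Y : C} :
    (∀ f : X⟦(1 : ℤ)⟧ ⟶ Y, f = 0) ↔ ∀ f : X ⟶ Y⟦(-1 : ℤ)⟧, f = 0 := by
  refine ⟨fun h f => ?_, fun h f => ?_⟩
  · rw [← (shiftFunctor C (1 : ℤ)).map_eq_zero_iff,
      ← Preadditive.IsIso.comp_right_eq_zero _ (shiftNegShift Y (1 : ℤ)).hom]
    exact h _
  · rw [← (shiftFunctor C (-1 : ℤ)).map_eq_zero_iff,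
      ← Preadditive.IsIso.comp_left_eq_zero (shiftShiftNeg X (1 : ℤ)).inv]
    exact h _

end Shift

variable {C : Type*} [Category C] [HasZeroObject C] [Preadditive C] [HasShift C ℤ]
  [∀ n : ℤ, (shiftFunctor C n).Additive] [Pretriangulated C]

lemma hom_from_obj₂_eq_zero (T : Triangle C) (hT : T ∈ distTriang C) {Y : C}
    (h₁ : ∀ f : T.obj₁ ⟶ Y, f = 0) (h₃ : ∀ f : T.obj₃ ⟶ Y, f = 0) (f : T.obj₂ ⟶ Y) :
    f = 0 := by
  obtain ⟨g, rfl⟩ := T.yoneda_exact₂ hT f (h₁ _)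
  rw [h₃ g, comp_zero]

lemma hom_to_obj₂_eq_zero (T : Triangle C) (hT : T ∈ distTriang C) {X : C}
    (h₁ : ∀ f : X ⟶ T.obj₁, f = 0) (h₃ : ∀ f : X ⟶ T.obj₃, f = 0) (f : X ⟶ T.obj₂) :
    f = 0 := by
  obtain ⟨g, rfl⟩ := T.coyoneda_exact₂ hT f (h₃ _)
  rw [h₁ g, zero_comp]

lemma distinguished_mk_comp_iso (T : Triangle C) (hT : T ∈ distTriang C) {X : C}
    (e : T.obj₂ ≅ X) : Triangle.mk (T.mor₁ ≫ e.hom) (e.inv ≫ T.mor₂) T.mor₃ ∈ distTriang C :=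
  isomorphic_distinguished _ hT _ <|
    Triangle.isoMk _ _ (Iso.refl _) e.symm (Iso.refl _) (by dsimp [Triangle.mk]; simp)
      (by dsimp [Triangle.mk]; simp) (by dsimp [Triangle.mk]; simp)

/- Hom-vanishing consequences of the octahedral axiom, which a pretriangulated category need
not satisfy: the octahedron on `u ≫ w` makes `Z` an extension of `V'` by `f`, and the one on
`b ≫ c` makes `A` an extension of `t` by `U`. -/

lemma hom_to_cone_comp_eq_zero {t W V f V' Z X : C} {u : t ⟶ W} {v : W ⟶ f}
    {δ₁ : f ⟶ t⟦(1 : ℤ)⟧} {w : W ⟶ V} {g : V ⟶ V'} {δ₂ : V' ⟶ W⟦(1 : ℤ)⟧} {c : V ⟶ Z}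
    {δ : Z ⟶ t⟦(1 : ℤ)⟧} (h₁ : Triangle.mk u v δ₁ ∈ distTriang C)
    (h₂ : Triangle.mk w g δ₂ ∈ distTriang C) (h : Triangle.mk (u ≫ w) c δ ∈ distTriang C)
    (hf : ∀ φ : X ⟶ f, φ = 0) (hV' : ∀ φ : X ⟶ V', φ = 0) (φ : X ⟶ Z) : φ = 0 := by
  have hδuw : δ ≫ (u ≫ w)⟦(1 : ℤ)⟧' = 0 := comp_distTriang_mor_zero₃₁ _ h
  have huwc : (u ≫ w) ≫ c = 0 := comp_distTriang_mor_zero₁₂ _ h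
  have hδuw' : ((φ ≫ δ) ≫ u⟦(1 : ℤ)⟧') ≫ w⟦(1 : ℤ)⟧' = 0 := by simpa using φ ≫= hδuw
  obtain ⟨κ, hκ⟩ : ∃ κ : X ⟶ V', (φ ≫ δ) ≫ u⟦(1 : ℤ)⟧' = κ ≫ δ₂ :=
    Triangle.coyoneda_exact₁ _ h₂ _ hδuw'
  have hδu : (φ ≫ δ) ≫ u⟦(1 : ℤ)⟧' = 0 := by rw [hκ, hV' κ, zero_comp]
  obtain ⟨σ, hσ⟩ : ∃ σ : X ⟶ f, φ ≫ δ = σ ≫ δ₁ := Triangle.coyoneda_exact₁ _ h₁ _ hδu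
  have hφδ : φ ≫ δ = 0 := by rw [hσ, hf σ, zero_comp]
  obtain ⟨β, rfl⟩ : ∃ β : X ⟶ V, φ = β ≫ c := Triangle.coyoneda_exact₃ _ h φ hφδ
  obtain ⟨γ, rfl⟩ : ∃ γ : X ⟶ W, β = γ ≫ w := Triangle.coyoneda_exact₂ _ h₂ β (hV' _)
  obtain ⟨γ', rfl⟩ : ∃ γ' : X ⟶ t, γ = γ' ≫ u := Triangle.coyoneda_exact₂ _ h₁ γ (hf _)
  simpa using γ' ≫= huwc

lemma hom_from_cocone_comp_eq_zero {U Z V t W A Y : C} {a : U ⟶ Z} {b : Z ⟶ V}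
    {δ₁ : V ⟶ U⟦(1 : ℤ)⟧} {m : t ⟶ V} {c : V ⟶ W} {δ₂ : W ⟶ t⟦(1 : ℤ)⟧} {α : A ⟶ Z}
    {θ : W ⟶ A⟦(1 : ℤ)⟧} (h₁ : Triangle.mk a b δ₁ ∈ distTriang C)
    (h₂ : Triangle.mk m c δ₂ ∈ distTriang C) (h : Triangle.mk α (b ≫ c) θ ∈ distTriang C)
    (hU : ∀ φ : U ⟶ Y, φ = 0) (ht : ∀ φ : t ⟶ Y, φ = 0) (ξ : A ⟶ Y) : ξ = 0 := by
  have hα : ∀ φ : Z ⟶ Y, α ≫ φ = 0 := fun φ => by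
    obtain ⟨φ₁, rfl⟩ : ∃ φ₁ : V ⟶ Y, φ = b ≫ φ₁ := Triangle.yoneda_exact₂ _ h₁ φ (hU _)
    obtain ⟨φ₂, rfl⟩ : ∃ φ₂ : W ⟶ Y, φ₁ = c ≫ φ₂ := Triangle.yoneda_exact₂ _ h₂ φ₁ (ht _)
    have hαbc : α ≫ b ≫ c = 0 := comp_distTriang_mor_zero₁₂ _ h
    simpa using hαbc =≫ φ₂
  have hθ : θ ≫ ξ⟦(1 : ℤ)⟧' = 0 := by
    have hbcθ : (b ≫ c) ≫ θ = 0 := comp_distTriang_mor_zero₂₃ _ h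
    have hbcθξ : b ≫ c ≫ θ ≫ ξ⟦(1 : ℤ)⟧' = 0 := by simpa using hbcθ =≫ ξ⟦(1 : ℤ)⟧'
    obtain ⟨τ₁, hτ₁⟩ : ∃ τ₁ : U⟦(1 : ℤ)⟧ ⟶ Y⟦(1 : ℤ)⟧, c ≫ θ ≫ ξ⟦(1 : ℤ)⟧' = δ₁ ≫ τ₁ :=
      Triangle.yoneda_exact₃ _ h₁ _ hbcθξ
    have hcθ : c ≫ θ ≫ ξ⟦(1 : ℤ)⟧' = 0 := by
      rw [hτ₁, hom_shift_eq_zero_of_forall_hom_eq_zero hU 1 τ₁, comp_zero]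
    obtain ⟨τ₂, hτ₂⟩ : ∃ τ₂ : t⟦(1 : ℤ)⟧ ⟶ Y⟦(1 : ℤ)⟧, θ ≫ ξ⟦(1 : ℤ)⟧' = δ₂ ≫ τ₂ :=
      Triangle.yoneda_exact₃ _ h₂ _ hcθ
    rw [hτ₂, hom_shift_eq_zero_of_forall_hom_eq_zero ht 1 τ₂, comp_zero]
  have hrot : Triangle.mk (b ≫ c) θ (-α⟦(1 : ℤ)⟧') ∈ distTriang C := rot_of_distTriang _ h
  obtain ⟨φ, hφ⟩ : ∃ φ : Z⟦(1 : ℤ)⟧ ⟶ Y⟦(1 : ℤ)⟧, ξ⟦(1 : ℤ)⟧' = (-α⟦(1 : ℤ)⟧') ≫ φ :=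
    Triangle.yoneda_exact₃ _ hrot _ hθ
  obtain ⟨φ, rfl⟩ := (shiftFunctor C (1 : ℤ)).map_surjective φ
  rw [← (shiftFunctor C (1 : ℤ)).map_eq_zero_iff, hφ, Preadditive.neg_comp,
    ← Functor.map_comp, hα, Functor.map_zero, neg_zero]

end CategoryTheory.Pretriangulated

namespace Glueing

open ZeroObject

variable {D : Type*} [Category D] [HasZeroObject D] [Preadditive D] [HasShift D ℤ]
  [∀ n : ℤ, (shiftFunctor D n).Additive] [Pretriangulated D]

namespace IsTStructure

variable {Le Ge : D → Prop}

lemma le_of_isZero (ht : IsTStructure D Le Ge) {X : D} (hX : IsZero X) : Le X := by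
  obtain ⟨A, -, -, -, -, hA, -, -⟩ := ht.exists_triangle X
  exact ht.summands_le 0 0 (hX.eq_of_src _ _) hA

lemma ge_of_isZero (ht : IsTStructure D Le Ge) {X : D} (hX : IsZero X) : Ge X := by
  obtain ⟨-, B, -, -, -, -, hB, -⟩ := ht.exists_triangle X
  exact ht.summands_ge (0 : X ⟶ B⟦(1 : ℤ)⟧) 0 (hX.eq_of_src _ _) hB

lemma le_of_le_shift_neg_one (ht : IsTStructure D Le Ge) {X : D} (h : Le (X⟦(-1 : ℤ)⟧)) :
    Le X :=
  ht.isoClosed_le (shiftNegShift X 1) (ht.shift_le _ h)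

lemma ge_of_ge_shift_one (ht : IsTStructure D Le Ge) {X : D} (h : Ge (X⟦(1 : ℤ)⟧)) : Ge X :=
  ht.isoClosed_ge (shiftShiftNeg X 1) (ht.shift_ge _ h)

lemma le_shift_neg_one_shift_one (ht : IsTStructure D Le Ge) {X : D} (h : Le X) :
    Le (X⟦(1 : ℤ)⟧⟦(-1 : ℤ)⟧) :=
  ht.isoClosed_le (shiftShiftNeg X 1).symm h

lemma hom_eq_zero_of_le_shift_neg_one (ht : IsTStructure D Le Ge) {A B : D}
    (hA : Le (A⟦(-1 : ℤ)⟧)) (hB : Ge B) (f : A ⟶ B) : f = 0 :=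
  (shiftFunctor D (-1 : ℤ)).map_eq_zero_iff.mp
    (ht.orthogonal hA (ht.isoClosed_ge (shiftNegShift B 1).symm hB) _)

lemma shift_hom_eq_zero (ht : IsTStructure D Le Ge) {A B : D} (hA : Le A) (hB : Ge B)
    (f : A⟦(1 : ℤ)⟧ ⟶ B) : f = 0 :=
  ht.hom_eq_zero_of_le_shift_neg_one (ht.le_shift_neg_one_shift_one hA) hB f

lemma le_of_forall_hom_eq_zero (ht : IsTStructure D Le Ge) {E : D}
    (h : ∀ B, Ge (B⟦(1 : ℤ)⟧) → ∀ f : E ⟶ B, f = 0) : Le E := by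
  obtain ⟨A, B, f, g, δ, hA, hB, hT⟩ := ht.exists_triangle E
  have hg : 𝟙 E ≫ g = 0 := by rw [Category.id_comp]; exact h B hB g
  obtain ⟨s, hs⟩ : ∃ s : E ⟶ A, 𝟙 E = s ≫ f := Triangle.coyoneda_exact₂ _ hT (𝟙 E) hg
  exact ht.summands_le s f hs.symm hA

lemma ge_of_forall_hom_eq_zero (ht : IsTStructure D Le Ge) {E : D}
    (h : ∀ X, Le (X⟦(-1 : ℤ)⟧) → ∀ f : X ⟶ E, f = 0) : Ge E := by
  obtain ⟨A, B, f, g, δ, hA, hB, hT⟩ := ht.exists_triangle (E⟦(-1 : ℤ)⟧)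
  have hf : f ≫ 𝟙 _ = 0 := by
    rw [Category.comp_id]
    exact forall_shift_one_hom_eq_zero_iff.mp (h _ (ht.le_shift_neg_one_shift_one hA)) f
  obtain ⟨r, hr⟩ : ∃ r : B ⟶ E⟦(-1 : ℤ)⟧, 𝟙 _ = g ≫ r := Triangle.yoneda_exact₂ _ hT (𝟙 _) hf
  refine ht.isoClosed_ge (shiftNegShift E 1) (ht.summands_ge (g⟦(1 : ℤ)⟧') (r⟦(1 : ℤ)⟧') ?_ hB)
  rw [← Functor.map_comp, ← hr, CategoryTheory.Functor.map_id]

lemma le_of_distTriang (ht : IsTStructure D Le Ge) (T : Triangle D)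
    (hT : T ∈ distTriang D) (h₁ : Le T.obj₁) (h₃ : Le T.obj₃) : Le T.obj₂ :=
  ht.le_of_forall_hom_eq_zero fun _ hB =>
    hom_from_obj₂_eq_zero T hT (ht.orthogonal h₁ hB) (ht.orthogonal h₃ hB)

lemma ge_of_distTriang (ht : IsTStructure D Le Ge) (T : Triangle D)
    (hT : T ∈ distTriang D) (h₁ : Ge T.obj₁) (h₃ : Ge T.obj₃) : Ge T.obj₂ :=
  ht.ge_of_forall_hom_eq_zero fun _ hX =>
    hom_to_obj₂_eq_zero T hT (ht.hom_eq_zero_of_le_shift_neg_one hX h₁)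
      (ht.hom_eq_zero_of_le_shift_neg_one hX h₃)

lemma exists_distTriang_le_shift_neg_one_ge (ht : IsTStructure D Le Ge) (E : D) :
    ∃ (P Q : D) (p : P ⟶ E) (q : E ⟶ Q) (δ : Q ⟶ P⟦(1 : ℤ)⟧),
      Le (P⟦(-1 : ℤ)⟧) ∧ Ge Q ∧ Triangle.mk p q δ ∈ distTriang D := by
  obtain ⟨A, B, f, g, δ, hA, hB, hT⟩ := ht.exists_triangle (E⟦(-1 : ℤ)⟧)
  exact ⟨_, _, _, _, _, ht.le_shift_neg_one_shift_one hA, hB,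
    distinguished_mk_comp_iso _ (Triangle.shift_distinguished _ hT 1) (shiftNegShift E 1)⟩

lemma exists_distTriang_heart_of_ge (ht : IsTStructure D Le Ge) {E : D} (hE : Ge E) :
    ∃ (W E' : D) (w : W ⟶ E) (g : E ⟶ E') (δ : E' ⟶ W⟦(1 : ℤ)⟧),
      (Le W ∧ Ge W) ∧ Ge (E'⟦(1 : ℤ)⟧) ∧ Triangle.mk w g δ ∈ distTriang D := by
  obtain ⟨W, E', w, g, δ, hW, hE', hT⟩ := ht.exists_triangle E
  refine ⟨W, E', w, g, δ, ⟨hW, ?_⟩, hE', hT⟩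
  have hE'₂ : Ge (E'⟦(-1 : ℤ)⟧) := ht.shift_ge _ (ht.ge_of_ge_shift_one hE')
  exact ht.ge_of_forall_hom_eq_zero fun _ hX =>
    hom_to_obj₂_eq_zero _ (inv_rot_of_distTriang _ hT)
      (ht.hom_eq_zero_of_le_shift_neg_one hX hE'₂) (ht.hom_eq_zero_of_le_shift_neg_one hX hE)

end IsTStructure

namespace HeartTorsionPair

variable {Le Ge T F : D → Prop}

lemma torsion_of_forall_hom_eq_zero (ht : IsTStructure D Le Ge)
    (htf : HeartTorsionPair Le Ge T F) {X : D} (hXle : Le X) (hXge : Ge X)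
    (h : ∀ Y, F Y → ∀ f : X ⟶ Y, f = 0) : T X := by
  obtain ⟨t, f, u, v, w, htT, hfF, hT⟩ := htf.exists_triangle X hXle hXge
  have hv : v ≫ 𝟙 f = 0 := by rw [Category.comp_id]; exact h f hfF v
  obtain ⟨r, hr⟩ : ∃ r : t⟦(1 : ℤ)⟧ ⟶ f, 𝟙 f = w ≫ r :=
    Triangle.yoneda_exact₂ _ (rot_of_distTriang _ hT) _ hv
  have hf : IsZero f := by
    rw [IsZero.iff_id_eq_zero, hr,
      ht.shift_hom_eq_zero (htf.mem_heart_t t htT).1 (htf.mem_heart_f f hfF).2 r, comp_zero]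
  have : IsIso u := (Triangle.isZero₃_iff_isIso₁ _ hT).mp hf
  exact htf.isoClosed_t (asIso u) htT

lemma free_of_forall_hom_eq_zero (ht : IsTStructure D Le Ge)
    (htf : HeartTorsionPair Le Ge T F) {X : D} (hXle : Le X) (hXge : Ge X)
    (h : ∀ Y, T Y → ∀ f : Y ⟶ X, f = 0) : F X := by
  obtain ⟨t, f, u, v, w, htT, hfF, hT⟩ := htf.exists_triangle X hXle hXge
  have hu : 𝟙 (t⟦(1 : ℤ)⟧) ≫ (-u⟦(1 : ℤ)⟧') = 0 := by simp [h t htT u]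
  obtain ⟨p, hp⟩ : ∃ p : t⟦(1 : ℤ)⟧ ⟶ f, 𝟙 _ = p ≫ w :=
    Triangle.coyoneda_exact₃ _ (rot_of_distTriang _ hT) _ hu
  have hid : 𝟙 (t⟦(1 : ℤ)⟧) = 0 := by
    rw [hp, ht.shift_hom_eq_zero (htf.mem_heart_t t htT).1 (htf.mem_heart_f f hfF).2 p,
      zero_comp]
  have htzero : IsZero t := by
    rw [IsZero.iff_id_eq_zero, ← (shiftFunctor D (1 : ℤ)).map_eq_zero_iff,
      CategoryTheory.Functor.map_id, hid]
  have : IsIso v := (Triangle.isZero₁_iff_isIso₂ _ hT).mp htzero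
  exact htf.isoClosed_f (asIso v).symm hfF

lemma torsion_of_isZero (ht : IsTStructure D Le Ge) (htf : HeartTorsionPair Le Ge T F)
    {X : D} (hX : IsZero X) : T X :=
  htf.torsion_of_forall_hom_eq_zero ht (ht.le_of_isZero hX) (ht.ge_of_isZero hX)
    fun _ _ _ => hX.eq_of_src _ _

lemma free_of_isZero (ht : IsTStructure D Le Ge) (htf : HeartTorsionPair Le Ge T F)
    {X : D} (hX : IsZero X) : F X :=
  htf.free_of_forall_hom_eq_zero ht (ht.le_of_isZero hX) (ht.ge_of_isZero hX)
    fun _ _ _ => hX.eq_of_tgt _ _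

end HeartTorsionPair

section Tilt

variable {Le Ge T F : D → Prop}

lemma tiltLe_of_le_shift_neg_one (ht : IsTStructure D Le Ge)
    (htf : HeartTorsionPair Le Ge T F) {E : D} (h : Le (E⟦(-1 : ℤ)⟧)) : TiltLe Le Ge T E :=
  ⟨E, 0, 𝟙 E, 0, 0, h, ⟨ht.le_of_isZero (isZero_zero D), ht.ge_of_isZero (isZero_zero D)⟩,
    htf.torsion_of_isZero ht (isZero_zero D), contractible_distinguished E⟩

lemma tiltLe_of_torsion (ht : IsTStructure D Le Ge) (htf : HeartTorsionPair Le Ge T F)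
    {E : D} (hE : T E) : TiltLe Le Ge T E :=
  ⟨0, E, 0, 𝟙 E, 0, ht.le_of_isZero ((shiftFunctor D (-1 : ℤ)).map_isZero (isZero_zero D)),
    htf.mem_heart_t E hE, hE, contractible_distinguished₁ E⟩

lemma tiltGe_of_ge (ht : IsTStructure D Le Ge) (htf : HeartTorsionPair Le Ge T F) {E : D}
    (hE : Ge E) : TiltGe Le Ge F E :=
  have h₀ : IsZero ((0 : D)⟦(-1 : ℤ)⟧) := (shiftFunctor D (-1 : ℤ)).map_isZero (isZero_zero D)
  ⟨0, E, 0, 𝟙 E, 0, ⟨ht.le_of_isZero h₀, ht.ge_of_isZero h₀⟩, htf.free_of_isZero ht h₀, hE,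
    contractible_distinguished₁ E⟩

lemma tiltGe_shift_one_of_free (ht : IsTStructure D Le Ge)
    (htf : HeartTorsionPair Le Ge T F) {E : D} (hE : F E) : TiltGe Le Ge F (E⟦(1 : ℤ)⟧) :=
  have e : E⟦(1 : ℤ)⟧⟦(-1 : ℤ)⟧ ≅ E := shiftShiftNeg E 1
  have hE' := htf.mem_heart_f E hE
  ⟨E⟦(1 : ℤ)⟧, 0, 𝟙 _, 0, 0, ⟨ht.isoClosed_le e.symm hE'.1, ht.isoClosed_ge e.symm hE'.2⟩,
    htf.isoClosed_f e.symm hE, ht.ge_of_isZero (isZero_zero D), contractible_distinguished _⟩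

lemma le_of_tiltLe (ht : IsTStructure D Le Ge) {E : D} (hE : TiltLe Le Ge T E) : Le E := by
  obtain ⟨A, B, f, g, δ, hA, hB, -, hT⟩ := hE
  exact ht.le_of_distTriang _ hT (ht.le_of_le_shift_neg_one hA) hB.1

lemma ge_shift_neg_one_of_tiltGe (ht : IsTStructure D Le Ge) {E : D}
    (hE : TiltGe Le Ge F E) : Ge (E⟦(-1 : ℤ)⟧) := by
  obtain ⟨A, B, f, g, δ, hA, -, hB, hT⟩ := hE
  exact ht.ge_of_distTriang _ (Triangle.shift_distinguished _ hT (-1)) hA.2 (ht.shift_ge _ hB)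

lemma tiltLe_of_iso {A B : D} (e : A ≅ B) (hA : TiltLe Le Ge T A) : TiltLe Le Ge T B := by
  obtain ⟨P, Q, p, q, δ, hP, hQ, hQT, hT⟩ := hA
  exact ⟨P, Q, p ≫ e.hom, e.inv ≫ q, δ, hP, hQ, hQT, distinguished_mk_comp_iso _ hT e⟩

lemma tiltGe_of_iso {A B : D} (e : A ≅ B) (hA : TiltGe Le Ge F A) : TiltGe Le Ge F B := by
  obtain ⟨P, Q, p, q, δ, hP, hPF, hQ, hT⟩ := hA
  exact ⟨P, Q, p ≫ e.hom, e.inv ≫ q, δ, hP, hPF, hQ, distinguished_mk_comp_iso _ hT e⟩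

lemma shift_hom_eq_zero_of_tiltLe_of_tiltGe (ht : IsTStructure D Le Ge)
    (htf : HeartTorsionPair Le Ge T F) {A B : D} (hA : TiltLe Le Ge T A)
    (hB : TiltGe Le Ge F B) (f : A⟦(1 : ℤ)⟧ ⟶ B) : f = 0 := by
  have hA₁ : Le (A⟦(1 : ℤ)⟧⟦(-1 : ℤ)⟧) := ht.le_shift_neg_one_shift_one (le_of_tiltLe ht hA)
  obtain ⟨P, Q, p, q, δ, hP, -, hQT, hTA⟩ := hA
  obtain ⟨X, Y, x, y, δ', hX, hXF, hY, hTB⟩ := hB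
  refine hom_to_obj₂_eq_zero _ hTB ?_ (ht.hom_eq_zero_of_le_shift_neg_one hA₁ hY) f
  exact hom_from_obj₂_eq_zero _ (Triangle.shift_distinguished _ hTA 1)
    (forall_shift_one_hom_eq_zero_iff.mpr (ht.hom_eq_zero_of_le_shift_neg_one hP hX.2))
    (forall_shift_one_hom_eq_zero_iff.mpr (htf.orthogonal hQT hXF))

lemma hom_eq_zero_of_tiltLe_of_tiltGe (ht : IsTStructure D Le Ge)
    (htf : HeartTorsionPair Le Ge T F) {A B : D} (hA : TiltLe Le Ge T A)
    (hB : TiltGe Le Ge F (B⟦(1 : ℤ)⟧)) (f : A ⟶ B) : f = 0 :=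
  (shiftFunctor D (1 : ℤ)).map_eq_zero_iff.mp (shift_hom_eq_zero_of_tiltLe_of_tiltGe ht htf hA hB _)

lemma tiltGe_of_tiltGe_shift_one (ht : IsTStructure D Le Ge)
    (htf : HeartTorsionPair Le Ge T F) {E : D} (hE : TiltGe Le Ge F (E⟦(1 : ℤ)⟧)) :
    TiltGe Le Ge F E :=
  tiltGe_of_ge ht htf (ht.isoClosed_ge (shiftShiftNeg E 1) (ge_shift_neg_one_of_tiltGe ht hE))

lemma tiltLe_of_forall_hom_eq_zero (ht : IsTStructure D Le Ge)
    (htf : HeartTorsionPair Le Ge T F) {E : D}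
    (h : ∀ B, TiltGe Le Ge F (B⟦(1 : ℤ)⟧) → ∀ f : E ⟶ B, f = 0) : TiltLe Le Ge T E := by
  have hE : Le E := ht.le_of_forall_hom_eq_zero fun B hB => h B (tiltGe_of_ge ht htf hB)
  obtain ⟨P, Q, p, q, δ, hP, hQ, hT⟩ := ht.exists_distTriang_le_shift_neg_one_ge E
  have hQle : Le Q := ht.le_of_distTriang _ (rot_of_distTriang _ hT) hE
    (ht.shift_le _ (ht.le_of_le_shift_neg_one hP))
  refine ⟨P, Q, p, q, δ, hP, ⟨hQle, hQ⟩,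
    htf.torsion_of_forall_hom_eq_zero ht hQle hQ fun Y hY φ => ?_, hT⟩
  have hqφ : q ≫ φ = 0 := h Y (tiltGe_shift_one_of_free ht htf hY) _
  obtain ⟨ρ, rfl⟩ : ∃ ρ : P⟦(1 : ℤ)⟧ ⟶ Y, φ = δ ≫ ρ := Triangle.yoneda_exact₃ _ hT φ hqφ
  rw [ht.shift_hom_eq_zero (ht.le_of_le_shift_neg_one hP) (htf.mem_heart_f Y hY).2 ρ, comp_zero]

lemma tiltGe_shift_one_of_forall_hom_eq_zero (ht : IsTStructure D Le Ge)
    (htf : HeartTorsionPair Le Ge T F) {E : D}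
    (h : ∀ A, TiltLe Le Ge T A → ∀ f : A ⟶ E, f = 0) : TiltGe Le Ge F (E⟦(1 : ℤ)⟧) := by
  have hE : Ge E :=
    ht.ge_of_forall_hom_eq_zero fun X hX => h X (tiltLe_of_le_shift_neg_one ht htf hX)
  obtain ⟨W, E', w, g, δ, hW, hE', hT⟩ := ht.exists_distTriang_heart_of_ge hE
  have hWF : F W := htf.free_of_forall_hom_eq_zero ht hW.1 hW.2 fun Y hY φ => by
    have hφw : φ⟦(1 : ℤ)⟧' ≫ w⟦(1 : ℤ)⟧' = 0 := by
      rw [← Functor.map_comp, h Y (tiltLe_of_torsion ht htf hY) (φ ≫ w), Functor.map_zero]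
    obtain ⟨κ, hκ⟩ : ∃ κ : Y⟦(1 : ℤ)⟧ ⟶ E', φ⟦(1 : ℤ)⟧' = κ ≫ δ :=
      Triangle.coyoneda_exact₁ _ hT _ hφw
    rw [← (shiftFunctor D (1 : ℤ)).map_eq_zero_iff, hκ,
      ht.orthogonal (ht.shift_le _ (htf.mem_heart_t Y hY).1) hE' κ, zero_comp]
  have e : W⟦(1 : ℤ)⟧⟦(-1 : ℤ)⟧ ≅ W := shiftShiftNeg W 1
  exact ⟨W⟦(1 : ℤ)⟧, E'⟦(1 : ℤ)⟧, _, _, _,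
    ⟨ht.isoClosed_le e.symm hW.1, ht.isoClosed_ge e.symm hW.2⟩, htf.isoClosed_f e.symm hWF,
    hE', Triangle.shift_distinguished _ hT 1⟩

lemma tiltLe_shift_one (ht : IsTStructure D Le Ge) (htf : HeartTorsionPair Le Ge T F)
    {A : D} (hA : TiltLe Le Ge T A) : TiltLe Le Ge T (A⟦(1 : ℤ)⟧) :=
  tiltLe_of_forall_hom_eq_zero ht htf fun _ hB =>
    shift_hom_eq_zero_of_tiltLe_of_tiltGe ht htf hA (tiltGe_of_tiltGe_shift_one ht htf hB)

lemma tiltGe_shift_neg_one (ht : IsTStructure D Le Ge) (htf : HeartTorsionPair Le Ge T F)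
    {A : D} (hA : TiltGe Le Ge F A) : TiltGe Le Ge F (A⟦(-1 : ℤ)⟧) :=
  tiltGe_of_iso (shiftNegShift (A⟦(-1 : ℤ)⟧) 1) <|
    tiltGe_shift_one_of_forall_hom_eq_zero ht htf fun _ hX =>
      forall_shift_one_hom_eq_zero_iff.mp <| forall_shift_one_hom_eq_zero_iff.mp <|
        shift_hom_eq_zero_of_tiltLe_of_tiltGe ht htf (tiltLe_shift_one ht htf hX) hA

lemma tiltLe_of_retract (ht : IsTStructure D Le Ge) (htf : HeartTorsionPair Le Ge T F)
    {A B : D} (i : A ⟶ B) (r : B ⟶ A) (hir : i ≫ r = 𝟙 A) (hB : TiltLe Le Ge T B) :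
    TiltLe Le Ge T A :=
  tiltLe_of_forall_hom_eq_zero ht htf fun _ hY f => by
    rw [← Category.id_comp f, ← hir, Category.assoc,
      hom_eq_zero_of_tiltLe_of_tiltGe ht htf hB hY (r ≫ f), comp_zero]

lemma tiltGe_of_retract (ht : IsTStructure D Le Ge) (htf : HeartTorsionPair Le Ge T F)
    {A B : D} (i : A ⟶ B) (r : B ⟶ A) (hir : i ≫ r = 𝟙 A) (hB : TiltGe Le Ge F B) :
    TiltGe Le Ge F A := by
  have hB' : TiltGe Le Ge F (B⟦(-1 : ℤ)⟧⟦(1 : ℤ)⟧) := tiltGe_of_iso (shiftNegShift B 1).symm hB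
  refine tiltGe_of_iso (shiftNegShift A 1)
    (tiltGe_shift_one_of_forall_hom_eq_zero ht htf fun X hX f => ?_)
  have hf : f = (f ≫ i⟦(-1 : ℤ)⟧') ≫ r⟦(-1 : ℤ)⟧' := by simp [← Functor.map_comp, hir]
  rw [hf, hom_eq_zero_of_tiltLe_of_tiltGe ht htf hX hB' (f ≫ i⟦(-1 : ℤ)⟧'), zero_comp]

lemma exists_distTriang_tiltLe_tiltGe (ht : IsTStructure D Le Ge)
    (htf : HeartTorsionPair Le Ge T F) (Z : D) :
    ∃ (A B : D) (f : A ⟶ Z) (g : Z ⟶ B) (h : B ⟶ A⟦(1 : ℤ)⟧),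
      TiltLe Le Ge T A ∧ TiltGe Le Ge F (B⟦(1 : ℤ)⟧) ∧ Triangle.mk f g h ∈ distTriang D := by
  obtain ⟨U, V, a, b, δ₁, hU, hV, hT₁⟩ := ht.exists_distTriang_le_shift_neg_one_ge Z
  obtain ⟨W, V', w, g, δ₂, hW, hV', hT₂⟩ := ht.exists_distTriang_heart_of_ge hV
  obtain ⟨t, f, u, v, δ₃, htT, hfF, hT₃⟩ := htf.exists_triangle W hW.1 hW.2
  obtain ⟨C, c, δ₄, hT₄⟩ := distinguished_cocone_triangle (u ≫ w)
  obtain ⟨A, α, θ, hT₅⟩ := distinguished_cocone_triangle₁ (b ≫ c)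
  refine ⟨A, C, α, b ≫ c, θ, tiltLe_of_forall_hom_eq_zero ht htf fun Y hY => ?_,
    tiltGe_shift_one_of_forall_hom_eq_zero ht htf fun X hX => ?_, hT₅⟩
  · exact hom_from_cocone_comp_eq_zero hT₁ hT₄ hT₅
      (hom_eq_zero_of_tiltLe_of_tiltGe ht htf (tiltLe_of_le_shift_neg_one ht htf hU) hY)
      (hom_eq_zero_of_tiltLe_of_tiltGe ht htf (tiltLe_of_torsion ht htf htT) hY)
  · exact hom_to_cone_comp_eq_zero hT₃ hT₂ hT₄
      (hom_eq_zero_of_tiltLe_of_tiltGe ht htf hX (tiltGe_shift_one_of_free ht htf hfF))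
      (ht.orthogonal (le_of_tiltLe ht hX) hV')

end Tilt

end Glueing

open Glueing CategoryTheory Limits Pretriangulated in
/-- Happel–Reiten–Smalø tilt: if `(Le, Ge)` is a bounded t-structure on `D` with heart
`A` and `(T, F)` is a torsion pair in `A`, then the HRS-tilt `(D̃^{≤0}, D̃^{≥0})` is a
t-structure on `D` and satisfies `D^{≤-1} ⊆ D̃^{≤0} ⊆ D^{≤0}`. -/
theorem hrs_tilt_tStructure
    {D : Type*} [Category D] [HasZeroObject D] [Preadditive D] [HasShift D ℤ]
    [∀ n : ℤ, (shiftFunctor D n).Additive] [Pretriangulated D]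
    {Le Ge : D → Prop} (ht : IsTStructure D Le Ge)
    (hbounded : ∀ Z : D, (∃ n : ℤ, Le (Z⟦n⟧)) ∧ (∃ n : ℤ, Ge (Z⟦n⟧)))
    {T F : D → Prop} (htf : HeartTorsionPair Le Ge T F) :
    IsTStructure D (TiltLe Le Ge T) (TiltGe Le Ge F) ∧
      (∀ E : D, Le (E⟦(-1 : ℤ)⟧) → TiltLe Le Ge T E) ∧
      (∀ E : D, TiltLe Le Ge T E → Le E) :=
  ⟨{ isoClosed_le := tiltLe_of_iso
     isoClosed_ge := tiltGe_of_iso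
     summands_le := tiltLe_of_retract ht htf
     summands_ge := tiltGe_of_retract ht htf
     shift_le := fun _ => tiltLe_shift_one ht htf
     shift_ge := fun _ => tiltGe_shift_neg_one ht htf
     orthogonal := hom_eq_zero_of_tiltLe_of_tiltGe ht htf
     exists_triangle := exists_distTriang_tiltLe_tiltGe ht htf },
    fun _ => tiltLe_of_le_shift_neg_one ht htf, fun _ => le_of_tiltLe ht⟩
end

section
/- Let D be a triangulated category with a recollement by Y and X such that the t-structure (D^{≤0}, D^{≥0}) is glued from t-structures on Y and X, and let (T, F) be a torsion pair in the heart A_D. Then the HRS-tilt (D̃^{≤0}, D̃^{≥0}) of (D^{≤0}, D^{≥0}) with respect to (T, F) satisfies j_!j^*(D̃^{≤0}) ⊆ D̃^{≤0} (equivalently, is glued with respect to the recollement) if and only if (T, F) is compatible with the induced recollement of hearts, i.e. ᵖj_!ᵖj^*(T) ⊆ T. -/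
open CategoryTheory Limits Pretriangulated

/-!
Forward direction: an object `A ∈ T` lies in the tilted aisle via `0 → A → A → 0`, hence so
does `j_!j^*A`, and its defining triangle is the one required.

Backward direction: let `A → E → B → A[1]` exhibit `E` in the tilted aisle, let
`W → j_!j^*B → B' → W[1]` be the compatibility triangle of `B ∈ T`, and let `W'` be the fibre of
`j_!j^*E → j_!j^*B → B'`. Then `j_!j^*E` lies in the tilted aisle via `W' → j_!j^*E → B'`, once
`W' ∈ D^{≤-1}`. That membership is tested by `j^*` and `i^*` separately, so no octahedron in `D`
is needed. On the `X` side, `j^*W` lies in `X^{≤-1}` and is the fibre of a map between objects of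
`X^{≥0}`, so it vanishes; thus `j^*(j_!j^*B → B')` is invertible and `j^*W' ≅ j^*A`. On the `Y` side,
`i^*j_! = 0` makes both `i^*W'[1]` and `i^*W[1]` isomorphic to `i^*B'`.
-/

namespace Glueing

open CategoryTheory Limits Pretriangulated

lemma _root_.CategoryTheory.Functor.nonempty_iso_map_shift {C C' : Type*} [Category C]
    [Category C'] [HasShift C ℤ] [HasShift C' ℤ] (G : C ⥤ C') [G.CommShift ℤ] {A B : C}
    (h : Nonempty (G.obj A ≅ G.obj B)) (n : ℤ) : Nonempty (G.obj (A⟦n⟧) ≅ G.obj (B⟦n⟧)) :=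
  h.map fun e =>
    (G.commShiftIso n).app A ≪≫ (shiftFunctor C' n).mapIso e ≪≫ ((G.commShiftIso n).app B).symm

section Pretriangulated

variable {C : Type*} [Category C] [HasZeroObject C] [Preadditive C] [HasShift C ℤ]
  [∀ n : ℤ, (shiftFunctor C n).Additive] [Pretriangulated C] {Le Ge : C → Prop}

namespace IsTStructure

lemma le_of_isZero_s16 (t : IsTStructure C Le Ge) {Z : C} (hZ : IsZero Z) : Le Z := by
  obtain ⟨A, -, -, -, -, hA, -, -⟩ := t.exists_triangle Z
  exact t.summands_le (0 : Z ⟶ A) 0 (hZ.eq_of_src _ _) hA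

lemma hom_eq_zero (t : IsTStructure C Le Ge) {A B : C} (hA : Le (A⟦(-1 : ℤ)⟧)) (hB : Ge B)
    (f : A ⟶ B) : f = 0 := by
  have hB' : Ge ((B⟦(-1 : ℤ)⟧)⟦(1 : ℤ)⟧) :=
    t.isoClosed_ge ((shiftFunctorCompIsoId C (-1 : ℤ) 1 (by omega)).app B).symm hB
  exact (shiftFunctor C (-1 : ℤ)).map_eq_zero_iff.1 (t.orthogonal hA hB' _)

lemma isZero_of_distTriang (t : IsTStructure C Le Ge) (T : Triangle C)
    (hT : T ∈ distTriang C) (h₁ : Le (T.obj₁⟦(-1 : ℤ)⟧)) (h₂ : Ge T.obj₂) (h₃ : Ge T.obj₃) :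
    IsZero T.obj₁ := by
  rw [IsZero.iff_id_eq_zero]
  obtain ⟨k, hk⟩ := Triangle.coyoneda_exact₂ _ (inv_rot_of_distTriang _ hT) (𝟙 T.obj₁)
    ((Category.id_comp _).trans (t.hom_eq_zero h₁ h₂ T.mor₁))
  have hk₀ : k = 0 := t.hom_eq_zero h₁ (t.shift_ge _ h₃) k
  rw [hk, hk₀]
  exact zero_comp

end IsTStructure

lemma nonempty_iso_obj₁_of_iso₂₃ (T₁ T₂ : Triangle C) (hT₁ : T₁ ∈ distTriang C)
    (hT₂ : T₂ ∈ distTriang C) (e₂ : T₁.obj₂ ≅ T₂.obj₂) (e₃ : T₁.obj₃ ≅ T₂.obj₃)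
    (comm : T₁.mor₂ ≫ e₃.hom = e₂.hom ≫ T₂.mor₂) : Nonempty (T₁.obj₁ ≅ T₂.obj₁) := by
  obtain ⟨a, ha₁, ha₃⟩ := complete_distinguished_triangle_morphism₁ T₁ T₂ hT₁ hT₂ _ _ comm
  have : IsIso a := isIso₁_of_isIso₂₃ (Triangle.homMk T₁ T₂ a e₂.hom e₃.hom ha₁ comm ha₃)
    hT₁ hT₂ (inferInstanceAs (IsIso e₂.hom)) (inferInstanceAs (IsIso e₃.hom))
  exact ⟨asIso a⟩

open ZeroObject in
lemma tiltLe_of_mem_heart {Le Ge T : C → Prop} (hLe : ∀ Z : C, IsZero Z → Le Z) {A : C}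
    (hA : Le A ∧ Ge A) (hT : T A) : TiltLe Le Ge T A :=
  ⟨0, A, 0, 𝟙 A, 0, hLe _ ((shiftFunctor C (-1 : ℤ)).map_isZero (isZero_zero C)), hA, hT,
    contractible_distinguished₁ A⟩

end Pretriangulated

namespace Recollement

variable {D Y X : Type*} [Category D] [HasZeroObject D] [Preadditive D] [HasShift D ℤ]
  [∀ n : ℤ, (shiftFunctor D n).Additive] [Pretriangulated D]
  [Category Y] [HasZeroObject Y] [Preadditive Y] [HasShift Y ℤ]
  [∀ n : ℤ, (shiftFunctor Y n).Additive] [Pretriangulated Y]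
  [Category X] [HasZeroObject X] [Preadditive X] [HasShift X ℤ]
  [∀ n : ℤ, (shiftFunctor X n).Additive] [Pretriangulated X]

attribute [local instance] Recollement.commShift_iStar Recollement.commShift_jStar
  Recollement.commShift_jLower Recollement.isTriangulated_iStar Recollement.isTriangulated_jStar
  Recollement.isTriangulated_jLower Recollement.iLower_full Recollement.iLower_faithful
  Recollement.jLower_full Recollement.jLower_faithful Recollement.commShift_iLower
  Recollement.isTriangulated_iLower

variable (R : Recollement D Y X) {XLe XGe : X → Prop} {YLe YGe : Y → Prop}

def gluedLe (XLe : X → Prop) (YLe : Y → Prop) (Z : D) : Prop :=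
  XLe (R.jStar.obj Z) ∧ YLe (R.iStar.obj Z)

def gluedGe (XGe : X → Prop) (YGe : Y → Prop) (Z : D) : Prop :=
  XGe (R.jStar.obj Z) ∧ YGe (R.iShriek.obj Z)

lemma gluedLe_of_isZero (hX : IsTStructure X XLe XGe) (hY : IsTStructure Y YLe YGe) {Z : D}
    (hZ : IsZero Z) : R.gluedLe XLe YLe Z :=
  ⟨hX.le_of_isZero_s16 (R.jStar.map_isZero hZ), hY.le_of_isZero_s16 (R.iStar.map_isZero hZ)⟩

lemma isZero_iStar_jLower (x : X) : IsZero (R.iStar.obj (R.jLower.obj x)) := by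
  obtain ⟨δ, hδ⟩ := R.triangle₂ (R.jLower.obj x)
  exact IsZero.of_full_of_faithful_of_isZero R.iLower _
    (Triangle.isZero₃_of_isIso₁ _ hδ (inferInstanceAs (IsIso (R.adj_j₁.counit.app _))))

lemma nonempty_iso_iStar_of_distTriang {x x' : X} {W W' B : D} {w : W ⟶ R.jLower.obj x}
    {u : R.jLower.obj x ⟶ B} {ε : B ⟶ W⟦(1 : ℤ)⟧} {w' : W' ⟶ R.jLower.obj x'}
    {u' : R.jLower.obj x' ⟶ B} {ε' : B ⟶ W'⟦(1 : ℤ)⟧}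
    (hT : Triangle.mk w u ε ∈ distTriang D) (hT' : Triangle.mk w' u' ε' ∈ distTriang D) :
    Nonempty (R.iStar.obj W ≅ R.iStar.obj W') :=
  nonempty_iso_obj₁_of_iso₂₃ _ _ (R.iStar.map_distinguished _ hT)
    (R.iStar.map_distinguished _ hT') ((R.isZero_iStar_jLower x).iso (R.isZero_iStar_jLower x'))
    (Iso.refl _) ((R.isZero_iStar_jLower x).eq_of_src _ _)

lemma nonempty_iso_jStar_of_distTriang {A E B B' W : D} {f : A ⟶ E} {g : E ⟶ B}
    {h : B ⟶ A⟦(1 : ℤ)⟧} {v : R.jLower.obj (R.jStar.obj B) ⟶ B'}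
    {w : W ⟶ R.jLower.obj (R.jStar.obj E)} {ε : B' ⟶ W⟦(1 : ℤ)⟧} [IsIso (R.jStar.map v)]
    (hT : Triangle.mk f g h ∈ distTriang D)
    (hT' : Triangle.mk w (R.jLower.map (R.jStar.map g) ≫ v) ε ∈ distTriang D) :
    Nonempty (R.jStar.obj A ≅ R.jStar.obj W) := by
  let e₂ : R.jStar.obj E ≅ R.jStar.obj (R.jLower.obj (R.jStar.obj E)) :=
    asIso (R.adj_j₁.unit.app (R.jStar.obj E))
  let e₃ : R.jStar.obj B ≅ R.jStar.obj B' :=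
    asIso (R.adj_j₁.unit.app (R.jStar.obj B)) ≪≫ asIso (R.jStar.map v)
  refine nonempty_iso_obj₁_of_iso₂₃ _ _ (R.jStar.map_distinguished _ hT)
    (R.jStar.map_distinguished _ hT') e₂ e₃ ?_
  change R.jStar.map g ≫ R.adj_j₁.unit.app _ ≫ R.jStar.map v =
    R.adj_j₁.unit.app _ ≫ R.jStar.map (R.jLower.map (R.jStar.map g) ≫ v)
  rw [Functor.map_comp, ← R.adj_j₁.unit_naturality_assoc]

lemma isIso_jStar_map_of_distTriang (hX : IsTStructure X XLe XGe) {W M B : D} {w : W ⟶ M}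
    {v : M ⟶ B} {ε : B ⟶ W⟦(1 : ℤ)⟧} (hT : Triangle.mk w v ε ∈ distTriang D)
    (hW : XLe (R.jStar.obj (W⟦(-1 : ℤ)⟧))) (hM : XGe (R.jStar.obj M))
    (hB : XGe (R.jStar.obj B)) : IsIso (R.jStar.map v) := by
  have hT' := R.jStar.map_distinguished _ hT
  refine (Triangle.isZero₁_iff_isIso₂ _ hT').1 (hX.isZero_of_distTriang _ hT' ?_ hM hB)
  exact hX.isoClosed_le ((R.jStar.commShiftIso (-1 : ℤ)).app W) hW

theorem tiltLe_jLower_jStar (hX : IsTStructure X XLe XGe) (hY : IsTStructure Y YLe YGe)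
    {T : D → Prop} (hT_heart : ∀ A, T A → R.gluedLe XLe YLe A ∧ R.gluedGe XGe YGe A)
    (hcompat : ∀ A : D, T A →
      ∃ (W B : D) (f : W ⟶ R.jLower.obj (R.jStar.obj A))
        (g : R.jLower.obj (R.jStar.obj A) ⟶ B) (h : B ⟶ W⟦(1 : ℤ)⟧),
        R.gluedLe XLe YLe (W⟦(-1 : ℤ)⟧) ∧ T B ∧ Triangle.mk f g h ∈ distTriang D)
    {E : D} (hE : TiltLe (R.gluedLe XLe YLe) (R.gluedGe XGe YGe) T E) :
    TiltLe (R.gluedLe XLe YLe) (R.gluedGe XGe YGe) T (R.jLower.obj (R.jStar.obj E)) := by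
  obtain ⟨A, B, f, g, h, hA, hB, hBT, hT₁⟩ := hE
  obtain ⟨W, B', w, v, ε, hW, hB'T, hT₂⟩ := hcompat B hBT
  obtain ⟨W', w', ε', hT₃⟩ := distinguished_cocone_triangle₁ (R.jLower.map (R.jStar.map g) ≫ v)
  have hB' := hT_heart B' hB'T
  have : IsIso (R.jStar.map v) := R.isIso_jStar_map_of_distTriang hX hT₂ hW.1
    (hX.isoClosed_ge (asIso (R.adj_j₁.unit.app _)) hB.2.1) hB'.2.1
  obtain ⟨eX⟩ := R.jStar.nonempty_iso_map_shift (R.nonempty_iso_jStar_of_distTriang hT₁ hT₃) (-1)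
  obtain ⟨eY⟩ := R.iStar.nonempty_iso_map_shift (R.nonempty_iso_iStar_of_distTriang hT₂ hT₃) (-1)
  exact ⟨W', B', w', _, ε', ⟨hX.isoClosed_le eX hA.1, hY.isoClosed_le eY hW.2⟩, hB', hB'T, hT₃⟩

end Recollement

end Glueing

open Glueing CategoryTheory Limits Pretriangulated in
/-- Let `(D^{≤0}, D^{≥0})` be the t-structure glued from t-structures on `Y` and `X`
along a recollement, and `(T, F)` a torsion pair in its heart. Then the HRS-tilt
`(D̃^{≤0}, D̃^{≥0})` satisfies `j_!j^*(D̃^{≤0}) ⊆ D̃^{≤0}` (i.e. it is glued with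
respect to the recollement) if and only if `(T, F)` is compatible with the induced
recollement of hearts, i.e. `ᵖj_!ᵖj^*(T) ⊆ T` (for `A ∈ T`, the zeroth cohomology
`H^0(j_!j^*A) = ᵖj_!ᵖj^*A` lies in `T`). -/
theorem hrs_tilt_glued_iff_compatible
    {D Y X : Type*} [Category D] [HasZeroObject D] [Preadditive D] [HasShift D ℤ]
    [∀ n : ℤ, (shiftFunctor D n).Additive] [Pretriangulated D]
    [Category Y] [HasZeroObject Y] [Preadditive Y] [HasShift Y ℤ]
    [∀ n : ℤ, (shiftFunctor Y n).Additive] [Pretriangulated Y]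
    [Category X] [HasZeroObject X] [Preadditive X] [HasShift X ℤ]
    [∀ n : ℤ, (shiftFunctor X n).Additive] [Pretriangulated X]
    (R : Recollement D Y X)
    {XLe XGe : X → Prop} {YLe YGe : Y → Prop}
    (hX : IsTStructure X XLe XGe) (hY : IsTStructure Y YLe YGe)
    (hXbounded : ∀ Z : X, (∃ n : ℤ, XLe (Z⟦n⟧)) ∧ (∃ n : ℤ, XGe (Z⟦n⟧)))
    (hYbounded : ∀ Z : Y, (∃ n : ℤ, YLe (Z⟦n⟧)) ∧ (∃ n : ℤ, YGe (Z⟦n⟧)))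
    {T F : D → Prop}
    (htf : HeartTorsionPair (fun Z => XLe (R.jStar.obj Z) ∧ YLe (R.iStar.obj Z))
      (fun Z => XGe (R.jStar.obj Z) ∧ YGe (R.iShriek.obj Z)) T F) :
    (∀ E : D,
        TiltLe (fun Z => XLe (R.jStar.obj Z) ∧ YLe (R.iStar.obj Z))
          (fun Z => XGe (R.jStar.obj Z) ∧ YGe (R.iShriek.obj Z)) T E →
        TiltLe (fun Z => XLe (R.jStar.obj Z) ∧ YLe (R.iStar.obj Z))
          (fun Z => XGe (R.jStar.obj Z) ∧ YGe (R.iShriek.obj Z)) T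
          (R.jLower.obj (R.jStar.obj E))) ↔
      (∀ A : D, T A →
        ∃ (W B : D) (f : W ⟶ R.jLower.obj (R.jStar.obj A))
          (g : R.jLower.obj (R.jStar.obj A) ⟶ B) (h : B ⟶ W⟦(1 : ℤ)⟧),
          (XLe (R.jStar.obj (W⟦(-1 : ℤ)⟧)) ∧ YLe (R.iStar.obj (W⟦(-1 : ℤ)⟧))) ∧
          T B ∧ Triangle.mk f g h ∈ distinguishedTriangles) := by
  constructor
  · intro hglued A hA
    obtain ⟨W, B, f, g, h, hW, -, hB, hT⟩ := hglued A
      (tiltLe_of_mem_heart (fun _ => R.gluedLe_of_isZero hX hY) (htf.mem_heart_t A hA) hA)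
    exact ⟨W, B, f, g, h, hW, hB, hT⟩
  · exact fun hcompat _ => R.tiltLe_jLower_jStar hX hY htf.mem_heart_t hcompat
end

section
/- Let A_Y → A_D → A_X be the recollement of hearts induced by a recollement of triangulated categories and glued t-structures. Given torsion pairs (T_Y, F_Y) in A_Y and (T_X, F_X) in A_X, define T = {A ∈ A_D : ᵖi^*A ∈ T_Y, ᵖj^*A ∈ T_X} and F = {A ∈ A_D : ᵖi^!A ∈ F_Y, ᵖj^*A ∈ F_X}. Then (T, F) is a torsion pair in A_D, it is compatible with the recollement (ᵖj_!ᵖj^*(T) ⊆ T), and its restrictions are exactly (T_Y, F_Y) and (T_X, F_X) (i.e. ᵖi^*(T) = T_Y, ᵖi^!(F) = F_Y, ᵖj^*(T) = T_X, ᵖj^*(F) = F_X). -/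
open CategoryTheory Limits

namespace Glueing

attribute [local instance] CategoryTheory.Limits.HasFiniteBiproducts.of_hasFiniteProducts


variable (AY AD AX : Type*) [Category AY] [Abelian AY] [Category AD] [Abelian AD]
  [Category AX] [Abelian AX]

end Glueing

/-!
The torsion part of `M` is cut out in two steps: `K = ker (M → ᵖj_*V)`, where `V` is the
torsion-free quotient of `ᵖj^*M`, and then `ker (K → ᵖi_*ᵖi^*K → ᵖi_*G)`, where `G` is the
torsion-free quotient of `ᵖi^*K`. Instead of computing `ᵖi^*`, `ᵖi^!` and `ᵖj^*` of this
subobject and of its cokernel, one uses that each glued class contains the Hom-orthogonal of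
the other, which the adjunctions reduce to the given torsion pairs. Hom-orthogonals are closed
under the quotients, subobjects and extensions that appear in the long exact sequence of
kernels and cokernels of a composition, which applies to both steps.
-/

namespace CategoryTheory.Adjunction

variable {C D : Type*} [Category C] [Category D] {F : C ⥤ D} {G : D ⥤ C}

lemma homEquiv_eq_zero_iff [HasZeroMorphisms C] [HasZeroMorphisms D] (adj : F ⊣ G)
    {X : C} {Y : D} (f : F.obj X ⟶ Y) : adj.homEquiv X Y f = 0 ↔ f = 0 := by
  have := adj.isLeftAdjoint
  have := adj.isRightAdjoint
  refine ⟨fun h => ?_, fun h => ?_⟩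
  · rw [← (adj.homEquiv X Y).symm_apply_apply f, h, homEquiv_counit, Functor.map_zero,
      zero_comp]
  · rw [h, homEquiv_unit, Functor.map_zero, comp_zero]

lemma homEquiv_symm_eq_zero_iff [HasZeroMorphisms C] [HasZeroMorphisms D] (adj : F ⊣ G)
    {X : C} {Y : D} (f : X ⟶ G.obj Y) : (adj.homEquiv X Y).symm f = 0 ↔ f = 0 := by
  rw [← homEquiv_eq_zero_iff adj, Equiv.apply_symm_apply]

noncomputable def objKernelHomEquivIso [Abelian C] [Abelian D] (adj : F ⊣ G)
    [PreservesFiniteLimits F] {X : C} {Y : D} [IsIso (adj.counit.app Y)] (v : F.obj X ⟶ Y) :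
    F.obj (kernel (adj.homEquiv X Y v)) ≅ kernel v :=
  have hv : F.map (adj.homEquiv X Y v) = v ≫ inv (adj.counit.app Y) := by
    rw [IsIso.eq_comp_inv, ← homEquiv_counit, Equiv.symm_apply_apply]
  PreservesKernel.iso F _ ≪≫ kernelIsoOfEq hv ≪≫ kernelCompMono v _

end CategoryTheory.Adjunction

namespace Glueing

section Orthogonal

variable {C : Type*} [Category C] [HasZeroMorphisms C]

def IsLeftOrthogonal (P : C → Prop) (X : C) : Prop :=
  ∀ ⦃Y : C⦄, P Y → ∀ f : X ⟶ Y, f = 0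

def IsRightOrthogonal (P : C → Prop) (Y : C) : Prop :=
  ∀ ⦃X : C⦄, P X → ∀ f : X ⟶ Y, f = 0

variable {P : C → Prop}

lemma IsLeftOrthogonal.of_epi {X Y : C} (p : X ⟶ Y) [Epi p] (h : IsLeftOrthogonal P X) :
    IsLeftOrthogonal P Y := fun _ hZ f =>
  (cancel_epi p).1 (by rw [h hZ (p ≫ f), comp_zero])

lemma IsRightOrthogonal.of_mono {X Y : C} (i : X ⟶ Y) [Mono i] (h : IsRightOrthogonal P Y) :
    IsRightOrthogonal P X := fun _ hZ f =>
  (cancel_mono i).1 (by rw [h hZ (f ≫ i), zero_comp])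

end Orthogonal

variable {C : Type*} [Category C] [Abelian C] {P : C → Prop}

lemma IsLeftOrthogonal.of_exact {S : ShortComplex C} (hS : S.Exact) [Epi S.g]
    (h₁ : IsLeftOrthogonal P S.X₁) (h₃ : IsLeftOrthogonal P S.X₃) :
    IsLeftOrthogonal P S.X₂ := fun _ hY f => by
  rw [← hS.g_desc f (h₁ hY _), h₃ hY (hS.desc f _), comp_zero]

lemma IsRightOrthogonal.of_exact {S : ShortComplex C} (hS : S.Exact) [Mono S.f]
    (h₁ : IsRightOrthogonal P S.X₁) (h₃ : IsRightOrthogonal P S.X₃) :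
    IsRightOrthogonal P S.X₂ := fun _ hX f => by
  rw [← hS.lift_f f (h₃ hX _), h₁ hX (hS.lift f _), zero_comp]

lemma IsLeftOrthogonal.kernel_comp {X Y Z : C} (f : X ⟶ Y) (g : Y ⟶ Z) [Epi f]
    (hf : IsLeftOrthogonal P (kernel f)) (hg : IsLeftOrthogonal P (kernel g)) :
    IsLeftOrthogonal P (kernel (f ≫ g)) := by
  have hseq := kernelCokernelCompSequence_exact f g
  have hS : (ShortComplex.mk (kernel.map f (f ≫ g) (𝟙 _) g (by simp))
      (kernel.map (f ≫ g) g f (𝟙 _) (by simp)) (by ext; simp)).Exact := hseq.exact 0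
  have : Epi (kernel.map (f ≫ g) g f (𝟙 _) (by simp)) :=
    (hseq.exact 1).epi_f ((isZero_cokernel_of_epi f).eq_of_tgt _ _)
  exact .of_exact hS hf hg

lemma IsRightOrthogonal.cokernel_comp {X Y Z : C} (f : X ⟶ Y) (g : Y ⟶ Z) [Mono g]
    (hf : IsRightOrthogonal P (cokernel f)) (hg : IsRightOrthogonal P (cokernel g)) :
    IsRightOrthogonal P (cokernel (f ≫ g)) := by
  have hseq := kernelCokernelCompSequence_exact f g
  have hS : (ShortComplex.mk (cokernel.map f (f ≫ g) (𝟙 _) g (by simp))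
      (cokernel.map (f ≫ g) g f (𝟙 _) (by simp)) (by ext; simp)).Exact := hseq.exact 3
  have : Mono (cokernel.map f (f ≫ g) (𝟙 _) g (by simp)) :=
    (hseq.exact 2).mono_g ((isZero_kernel_of_mono g).eq_of_src _ _)
  exact .of_exact hS hf hg

lemma IsRightOrthogonal.coimage {X Y : C} (f : X ⟶ Y) (h : IsRightOrthogonal P Y) :
    IsRightOrthogonal P (Abelian.coimage f) :=
  .of_mono (Abelian.factorThruCoimage f) h

namespace AbTorsionPair

variable {T F : C → Prop}

lemma t_of_isLeftOrthogonal (h : AbTorsionPair T F) {Z : C} (hZ : IsLeftOrthogonal F Z) :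
    T Z := by
  obtain ⟨X, Y, f, g, _, hX, hY, _, _, hS⟩ := h.exists_ses Z
  have : Epi f := hS.epi_f (hZ hY g)
  have := isIso_of_mono_of_epi f
  exact h.isoClosed_t (asIso f) hX

lemma f_of_isRightOrthogonal (h : AbTorsionPair T F) {Z : C} (hZ : IsRightOrthogonal T Z) :
    F Z := by
  obtain ⟨X, Y, f, g, _, hX, hY, _, _, hS⟩ := h.exists_ses Z
  have : Mono g := hS.mono_g (hZ hX f)
  have := isIso_of_mono_of_epi g
  exact h.isoClosed_f (asIso g).symm hY

lemma t_of_isZero (h : AbTorsionPair T F) {Z : C} (hZ : IsZero Z) : T Z :=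
  h.t_of_isLeftOrthogonal fun _ _ f => hZ.eq_of_src f 0

lemma f_of_isZero (h : AbTorsionPair T F) {Z : C} (hZ : IsZero Z) : F Z :=
  h.f_of_isRightOrthogonal fun _ _ f => hZ.eq_of_tgt f 0

lemma exists_kernel_torsion (h : AbTorsionPair T F) (M : C) :
    ∃ (Y : C) (g : M ⟶ Y), F Y ∧ T (kernel g) := by
  obtain ⟨X, Y, f, g, _, hX, hY, _, _, hS⟩ := h.exists_ses M
  exact ⟨Y, g, hY, h.isoClosed_t (hS.fIsKernel.conePointUniqueUpToIso (limit.isLimit _)) hX⟩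

end AbTorsionPair

lemma iff_exists_obj_iso_of_comp_iso_id {C D : Type*} [Category C] [Category D]
    {P : C → Prop} {Q : D → Prop} (hQ : ∀ {X Y : D}, (X ≅ Y) → Q X → Q Y) (Φ : C ⥤ D)
    (Ψ : D ⥤ C) (e : Ψ ⋙ Φ ≅ 𝟭 D) (hΦ : ∀ A, P A → Q (Φ.obj A))
    (hΨ : ∀ B, Q B → P (Ψ.obj B)) (B : D) : Q B ↔ ∃ A, P A ∧ Nonempty (Φ.obj A ≅ B) :=
  ⟨fun hB => ⟨Ψ.obj B, hΨ B hB, ⟨e.app B⟩⟩, fun ⟨A, hA, ⟨e'⟩⟩ => hQ e' (hΦ A hA)⟩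

namespace AbRecollement

attribute [local instance] piLower_full piLower_faithful piLower_preservesFiniteLimits
  pjStar_preservesFiniteLimits unit_j₁_iso counit_j₂_iso

variable {AY AD AX : Type*} [Category AY] [Category AD] [Abelian AD] [Category AX]
  (R : AbRecollement AY AD AX) {TY FY : AY → Prop} {TX FX : AX → Prop}

noncomputable def piLowerCompPiStarIso : R.piLower ⋙ R.piStar ≅ 𝟭 AY :=
  asIso R.adj_i₁.counit

noncomputable def piLowerCompPiShriekIso : R.piLower ⋙ R.piShriek ≅ 𝟭 AY :=
  (asIso R.adj_i₂.unit).symm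

noncomputable def pjLowerCompPjStarIso : R.pjLower ⋙ R.pjStar ≅ 𝟭 AX :=
  (asIso R.adj_j₁.unit).symm

noncomputable def pjUpperCompPjStarIso : R.pjUpper ⋙ R.pjStar ≅ 𝟭 AX :=
  asIso R.adj_j₂.counit

def gluedTorsion (TY : AY → Prop) (TX : AX → Prop) (A : AD) : Prop :=
  TY (R.piStar.obj A) ∧ TX (R.pjStar.obj A)

def gluedTorsionFree (FY : AY → Prop) (FX : AX → Prop) (A : AD) : Prop :=
  FY (R.piShriek.obj A) ∧ FX (R.pjStar.obj A)

lemma isLeftOrthogonal_piLower [Abelian AY] (hY : AbTorsionPair TY FY) {G : AY} (hG : TY G) :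
    IsLeftOrthogonal (R.gluedTorsionFree FY FX) (R.piLower.obj G) := fun _ hB f =>
  (R.adj_i₂.homEquiv_eq_zero_iff f).1 (hY.orthogonal hG hB.1 _)

lemma isLeftOrthogonal_pjLower [Abelian AX] (hX : AbTorsionPair TX FX) {H : AX} (hH : TX H) :
    IsLeftOrthogonal (R.gluedTorsionFree FY FX) (R.pjLower.obj H) := fun _ hB f =>
  (R.adj_j₁.homEquiv_eq_zero_iff f).1 (hX.orthogonal hH hB.2 _)

lemma isRightOrthogonal_piLower [Abelian AY] (hY : AbTorsionPair TY FY) {G : AY} (hG : FY G) :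
    IsRightOrthogonal (R.gluedTorsion TY TX) (R.piLower.obj G) := fun _ hA f =>
  (R.adj_i₁.homEquiv_symm_eq_zero_iff f).1 (hY.orthogonal hA.1 hG _)

lemma isRightOrthogonal_pjUpper [Abelian AX] (hX : AbTorsionPair TX FX) {H : AX} (hH : FX H) :
    IsRightOrthogonal (R.gluedTorsion TY TX) (R.pjUpper.obj H) := fun _ hA f =>
  (R.adj_j₂.homEquiv_symm_eq_zero_iff f).1 (hX.orthogonal hA.2 hH _)

/-- `ker (X → ᵖi_*ᵖi^*X)` is a quotient of `ᵖj_!ᵖj^*X`. -/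
lemma isLeftOrthogonal_kernel_unit_i₁ [Abelian AX] (hX : AbTorsionPair TX FX) {X : AD}
    (hjX : TX (R.pjStar.obj X)) :
    IsLeftOrthogonal (R.gluedTorsionFree FY FX) (kernel (R.adj_i₁.unit.app X)) :=
  have := (R.exact₁ X).epi_kernelLift
  .of_epi (kernel.lift _ _ (R.comp_zero₁ X)) (R.isLeftOrthogonal_pjLower hX hjX)

lemma isLeftOrthogonal_kernel_piLower_map [Abelian AY] (hY : AbTorsionPair TY FY) {G G' : AY}
    (q : G ⟶ G') (hq : TY (kernel q)) :
    IsLeftOrthogonal (R.gluedTorsionFree FY FX) (kernel (R.piLower.map q)) :=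
  .of_epi (PreservesKernel.iso R.piLower q).hom (R.isLeftOrthogonal_piLower hY hq)

section Abelian

variable [Abelian AY] [Abelian AX]

lemma isZero_piShriek_pjUpper (H : AX) : IsZero (R.piShriek.obj (R.pjUpper.obj H)) := by
  rw [IsZero.iff_id_eq_zero, ← (R.adj_i₂.comp R.adj_j₂).homEquiv_symm_eq_zero_iff]
  exact (R.pjStar_piLower_zero _).eq_of_src _ _

lemma gluedTorsion_piLower (hY : AbTorsionPair TY FY) (hX : AbTorsionPair TX FX) {G : AY}
    (hG : TY G) : R.gluedTorsion TY TX (R.piLower.obj G) :=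
  ⟨hY.isoClosed_t (R.piLowerCompPiStarIso.app G).symm hG,
    hX.t_of_isZero (R.pjStar_piLower_zero G)⟩

lemma gluedTorsion_pjLower (hY : AbTorsionPair TY FY) (hX : AbTorsionPair TX FX) {H : AX}
    (hH : TX H) : R.gluedTorsion TY TX (R.pjLower.obj H) :=
  ⟨hY.t_of_isZero (R.piStar_pjLower_zero H),
    hX.isoClosed_t (R.pjLowerCompPjStarIso.app H).symm hH⟩

lemma gluedTorsionFree_piLower (hY : AbTorsionPair TY FY) (hX : AbTorsionPair TX FX) {G : AY}
    (hG : FY G) : R.gluedTorsionFree FY FX (R.piLower.obj G) :=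
  ⟨hY.isoClosed_f (R.piLowerCompPiShriekIso.app G).symm hG,
    hX.f_of_isZero (R.pjStar_piLower_zero G)⟩

lemma gluedTorsionFree_pjUpper (hY : AbTorsionPair TY FY) (hX : AbTorsionPair TX FX) {H : AX}
    (hH : FX H) : R.gluedTorsionFree FY FX (R.pjUpper.obj H) :=
  ⟨hY.f_of_isZero (R.isZero_piShriek_pjUpper H),
    hX.isoClosed_f (R.pjUpperCompPjStarIso.app H).symm hH⟩

lemma gluedTorsion_of_isLeftOrthogonal (hY : AbTorsionPair TY FY) (hX : AbTorsionPair TX FX)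
    {A : AD} (hA : IsLeftOrthogonal (R.gluedTorsionFree FY FX) A) : R.gluedTorsion TY TX A :=
  ⟨hY.t_of_isLeftOrthogonal fun _ hG g =>
      (R.adj_i₁.homEquiv_eq_zero_iff g).1 (hA (R.gluedTorsionFree_piLower hY hX hG) _),
    hX.t_of_isLeftOrthogonal fun _ hH g =>
      (R.adj_j₂.homEquiv_eq_zero_iff g).1 (hA (R.gluedTorsionFree_pjUpper hY hX hH) _)⟩

lemma gluedTorsionFree_of_isRightOrthogonal (hY : AbTorsionPair TY FY)
    (hX : AbTorsionPair TX FX) {B : AD} (hB : IsRightOrthogonal (R.gluedTorsion TY TX) B) :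
    R.gluedTorsionFree FY FX B :=
  ⟨hY.f_of_isRightOrthogonal fun _ hG g =>
      (R.adj_i₂.homEquiv_symm_eq_zero_iff g).1 (hB (R.gluedTorsion_piLower hY hX hG) _),
    hX.f_of_isRightOrthogonal fun _ hH g =>
      (R.adj_j₁.homEquiv_symm_eq_zero_iff g).1 (hB (R.gluedTorsion_pjLower hY hX hH) _)⟩

/-- `ᵖi_*ᵖi^!B ↪ B → ᵖj_*ᵖj^*B` is exact. -/
lemma isRightOrthogonal_of_gluedTorsionFree (hY : AbTorsionPair TY FY)
    (hX : AbTorsionPair TX FX) {B : AD} (hB : R.gluedTorsionFree FY FX B) :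
    IsRightOrthogonal (R.gluedTorsion TY TX) B :=
  have := R.mono_counit_i₂ B
  .of_exact (R.exact₂ B) (R.isRightOrthogonal_piLower hY hB.1)
    (R.isRightOrthogonal_pjUpper hX hB.2)

lemma gluedTorsion_kernel (hY : AbTorsionPair TY FY) (hX : AbTorsionPair TX FX) {M : AD}
    {V : AX} (v : R.pjStar.obj M ⟶ V) (hv : TX (kernel v)) {G : AY}
    (q : R.piStar.obj (kernel (R.adj_j₂.homEquiv M V v)) ⟶ G) (hq : TY (kernel q)) :
    R.gluedTorsion TY TX (kernel (R.adj_i₁.unit.app _ ≫ R.piLower.map q)) := by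
  have := R.epi_unit_i₁ (kernel (R.adj_j₂.homEquiv M V v))
  have hjK := hX.isoClosed_t (R.adj_j₂.objKernelHomEquivIso v).symm hv
  exact R.gluedTorsion_of_isLeftOrthogonal hY hX <| .kernel_comp _ _
    (R.isLeftOrthogonal_kernel_unit_i₁ hX hjK) (R.isLeftOrthogonal_kernel_piLower_map hY q hq)

lemma gluedTorsionFree_cokernel (hY : AbTorsionPair TY FY) (hX : AbTorsionPair TX FX)
    {M : AD} {V : AX} (θ : M ⟶ R.pjUpper.obj V) (hV : FX V) {G : AY}
    (ψ : kernel θ ⟶ R.piLower.obj G) (hG : FY G) :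
    R.gluedTorsionFree FY FX (cokernel (kernel.ι ψ ≫ kernel.ι θ)) :=
  R.gluedTorsionFree_of_isRightOrthogonal hY hX <| .cokernel_comp _ _
    (.coimage ψ (R.isRightOrthogonal_piLower hY hG))
    (.coimage θ (R.isRightOrthogonal_pjUpper hX hV))

theorem abTorsionPair_glued (hY : AbTorsionPair TY FY) (hX : AbTorsionPair TX FX) :
    AbTorsionPair (R.gluedTorsion TY TX) (R.gluedTorsionFree FY FX) where
  isoClosed_t e h := ⟨hY.isoClosed_t (R.piStar.mapIso e) h.1,
    hX.isoClosed_t (R.pjStar.mapIso e) h.2⟩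
  isoClosed_f e h := ⟨hY.isoClosed_f (R.piShriek.mapIso e) h.1,
    hX.isoClosed_f (R.pjStar.mapIso e) h.2⟩
  orthogonal hA hB := R.isRightOrthogonal_of_gluedTorsionFree hY hX hB hA
  exists_ses M := by
    obtain ⟨V, v, hV, hv⟩ := hX.exists_kernel_torsion (R.pjStar.obj M)
    obtain ⟨G, q, hG, hq⟩ :=
      hY.exists_kernel_torsion (R.piStar.obj (kernel (R.adj_j₂.homEquiv M V v)))
    let ι := kernel.ι (R.adj_i₁.unit.app _ ≫ R.piLower.map q) ≫ kernel.ι _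
    exact ⟨_, _, ι, cokernel.π ι, cokernel.condition ι, R.gluedTorsion_kernel hY hX v hv q hq,
      R.gluedTorsionFree_cokernel hY hX _ hV _ hG, inferInstance, inferInstance,
      ShortComplex.exact_of_g_is_cokernel _ (cokernelIsCokernel ι)⟩

end Abelian

end AbRecollement

end Glueing

open Glueing CategoryTheory Limits in
/-- Glueing of torsion pairs in a recollement of abelian categories: given torsion
pairs `(T_Y, F_Y)` in `A_Y` and `(T_X, F_X)` in `A_X`, the pair
`T = {A : ᵖi^*A ∈ T_Y, ᵖj^*A ∈ T_X}`, `F = {A : ᵖi^!A ∈ F_Y, ᵖj^*A ∈ F_X}` is a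
torsion pair in `A_D`, it is compatible with the recollement (`ᵖj_!ᵖj^*(T) ⊆ T`),
and its restrictions are exactly `(T_Y, F_Y)` and `(T_X, F_X)`. -/
theorem abRecollement_glued_torsionPair
    {AY AD AX : Type*} [Category AY] [Abelian AY] [Category AD] [Abelian AD]
    [Category AX] [Abelian AX]
    (R : Glueing.AbRecollement AY AD AX)
    {TY FY : AY → Prop} {TX FX : AX → Prop}
    (hY : AbTorsionPair TY FY) (hX : AbTorsionPair TX FX) :
    AbTorsionPair (fun A : AD => TY (R.piStar.obj A) ∧ TX (R.pjStar.obj A))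
      (fun A : AD => FY (R.piShriek.obj A) ∧ FX (R.pjStar.obj A)) ∧
    (∀ A : AD, (TY (R.piStar.obj A) ∧ TX (R.pjStar.obj A)) →
      (TY (R.piStar.obj (R.pjLower.obj (R.pjStar.obj A))) ∧
        TX (R.pjStar.obj (R.pjLower.obj (R.pjStar.obj A))))) ∧
    (∀ B : AY, TY B ↔ ∃ A : AD, (TY (R.piStar.obj A) ∧ TX (R.pjStar.obj A)) ∧
      Nonempty (R.piStar.obj A ≅ B)) ∧
    (∀ B : AY, FY B ↔ ∃ A : AD, (FY (R.piShriek.obj A) ∧ FX (R.pjStar.obj A)) ∧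
      Nonempty (R.piShriek.obj A ≅ B)) ∧
    (∀ B : AX, TX B ↔ ∃ A : AD, (TY (R.piStar.obj A) ∧ TX (R.pjStar.obj A)) ∧
      Nonempty (R.pjStar.obj A ≅ B)) ∧
    (∀ B : AX, FX B ↔ ∃ A : AD, (FY (R.piShriek.obj A) ∧ FX (R.pjStar.obj A)) ∧
      Nonempty (R.pjStar.obj A ≅ B)) := by
  refine ⟨R.abTorsionPair_glued hY hX, fun _ hA => R.gluedTorsion_pjLower hY hX hA.2,
    ?_, ?_, ?_, ?_⟩
  · exact iff_exists_obj_iso_of_comp_iso_id hY.isoClosed_t R.piStar R.piLower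
      R.piLowerCompPiStarIso (fun _ hA => hA.1) fun _ => R.gluedTorsion_piLower hY hX
  · exact iff_exists_obj_iso_of_comp_iso_id hY.isoClosed_f R.piShriek R.piLower
      R.piLowerCompPiShriekIso (fun _ hA => hA.1) fun _ => R.gluedTorsionFree_piLower hY hX
  · exact iff_exists_obj_iso_of_comp_iso_id hX.isoClosed_t R.pjStar R.pjLower
      R.pjLowerCompPjStarIso (fun _ hA => hA.2) fun _ => R.gluedTorsion_pjLower hY hX
  · exact iff_exists_obj_iso_of_comp_iso_id hX.isoClosed_f R.pjStar R.pjUpper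
      R.pjUpperCompPjStarIso (fun _ hA => hA.2) fun _ => R.gluedTorsionFree_pjUpper hY hX
end
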